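/- arXiv:1808.06184 — 10 statements merged into one kernel-verified Lean document; each statement's English description precedes it below -/
import Mathlib

section
/- Let (K, T, w, A) be a WSC satisfying the exactly-two condition. Then π₁(K, w, A) is isomorphic to the free product (Monoid.CoprodI) of the family of groups indexed by the edges ab of K, where the factor at ab is: ℤ/w(ab) if ab lies in A; ℤ/w(ab) if ab does not lie in A but ab is an edge of some 2-simplex in T; and ℤ if ab does not lie in A and ab is not an edge of any 2-simplex in T. -/
open scoped Classical

variable {V : Type*}

/-- Generators of the weighted fundamental group: edges `ab` of `K` with `a < b`. -/
def WGen [LinearOrder V] (K : SimpleGraph V) : Type _ :=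
  {p : V × V // p.1 < p.2 ∧ K.Adj p.1 p.2}

/-- The relators of the weighted fundamental group: (1) `g_{ab}^{w(ab)}` for edges of the
spanning tree `A`; (2) `g_{ab}^{w(ab)} · (g_{av}^{w(av)} · g_{vb}^{w(vb)})⁻¹` for 2-simplices
`{a, v, b} ∈ T` with `a < v < b`. -/
def WRelators [LinearOrder V] (K : SimpleGraph V) (T : Set (Finset V))
    (w : Sym2 V → ℤ) (A : SimpleGraph V) : Set (FreeGroup (WGen K)) :=
  {r | ∃ e : WGen K, A.Adj e.1.1 e.1.2 ∧ r = FreeGroup.of e ^ w s(e.1.1, e.1.2)} ∪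
  {r | ∃ (a v b : V) (hav : a < v) (hvb : v < b)
       (h1 : K.Adj a v) (h2 : K.Adj v b) (h3 : K.Adj a b),
       ({a, v, b} : Finset V) ∈ T ∧
       r = FreeGroup.of (⟨(a, b), hav.trans hvb, h3⟩ : WGen K) ^ w s(a, b) *
         (FreeGroup.of (⟨(a, v), hav, h1⟩ : WGen K) ^ w s(a, v) *
          FreeGroup.of (⟨(v, b), hvb, h2⟩ : WGen K) ^ w s(v, b))⁻¹}

/-- The weighted fundamental group `π₁(K, w, A)` of the WSC `(K, T, w, A)`,
as a presented group. -/
def wpi1 [LinearOrder V] (K : SimpleGraph V) (T : Set (Finset V))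
    (w : Sym2 V → ℤ) (A : SimpleGraph V) : Type _ :=
  PresentedGroup (WRelators K T w A)

noncomputable instance [LinearOrder V] (K : SimpleGraph V) (T : Set (Finset V))
    (w : Sym2 V → ℤ) (A : SimpleGraph V) : Group (wpi1 K T w A) := by
  unfold wpi1; infer_instance

/-- `(K, T, w, A)` is a weighted simplicial complex: `K` is a connected simple graph,
`T` is a set of 2-simplices (unordered triples of distinct pairwise adjacent vertices),
and `A` is a spanning tree of `K`. -/
structure IsWSC (K : SimpleGraph V) (T : Set (Finset V))
    (w : Sym2 V → ℤ) (A : SimpleGraph V) : Prop where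
  conn : K.Connected
  tri : ∀ t ∈ T, ∃ a v b : V, a ≠ v ∧ v ≠ b ∧ a ≠ b ∧ t = {a, v, b} ∧
        K.Adj a v ∧ K.Adj v b ∧ K.Adj a b
  tree : A.IsTree
  le : A ≤ K

/-- Exactly two of the three edges of every 2-simplex of `T` lie in the tree `A`. -/
def ExactlyTwo [LinearOrder V] (T : Set (Finset V)) (A : SimpleGraph V) : Prop :=
  ∀ a v b : V, a < v → v < b → ({a, v, b} : Finset V) ∈ T →
    ((if A.Adj a b then 1 else 0) + (if A.Adj a v then 1 else 0) +
      (if A.Adj v b then 1 else 0) : ℕ) = 2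

/-- The modulus of the cyclic factor associated to an edge of `K`:
`|w(ab)|` if `ab` lies in `A` or is an edge of some 2-simplex in `T`,
and `0` otherwise (recall `ZMod 0 = ℤ`, so `ℤ/0 ≅ ℤ`). -/
noncomputable def facMod [LinearOrder V] (K : SimpleGraph V) (T : Set (Finset V))
    (w : Sym2 V → ℤ) (A : SimpleGraph V) (e : WGen K) : ℕ :=
  if A.Adj e.1.1 e.1.2 then (w s(e.1.1, e.1.2)).natAbs
  else if ∃ t ∈ T, e.1.1 ∈ t ∧ e.1.2 ∈ t then (w s(e.1.1, e.1.2)).natAbs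
  else 0


section AuxProof

variable [LinearOrder V] (K : SimpleGraph V) (T : Set (Finset V))
  (w : Sym2 V → ℤ) (A : SimpleGraph V)

private lemma wrel_one {r : FreeGroup (WGen K)} (hr : r ∈ WRelators K T w A) :
    PresentedGroup.mk (WRelators K T w A) r = 1 :=
  (QuotientGroup.eq_one_iff r).mpr (Subgroup.subset_normalClosure hr)

private lemma pow_natAbs {G : Type*} [Group G] {g : G} {z : ℤ} (h : g ^ z = 1) :
    g ^ ((z.natAbs : ℤ)) = 1 := by
  rcases Int.natAbs_eq z with hz | hz
  · rw [← hz]; exact h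
  · have hz' : ((z.natAbs : ℤ)) = -z := by conv_rhs => rw [hz, neg_neg]
    rw [hz', zpow_neg, h, inv_one]

private lemma tree_pow_one {x y : V} (hxy : x < y) (hK : K.Adj x y) (hA : A.Adj x y) :
    (PresentedGroup.of (rels := WRelators K T w A) ⟨(x, y), hxy, hK⟩) ^ w s(x, y) = 1 := by
  have h := wrel_one K T w A (Or.inl ⟨⟨(x, y), hxy, hK⟩, hA, rfl⟩)
  rw [map_zpow] at h
  exact h

private lemma tri_rel {a v b : V} (hav : a < v) (hvb : v < b)
    (k1 : K.Adj a v) (k2 : K.Adj v b) (k3 : K.Adj a b)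
    (ht : ({a, v, b} : Finset V) ∈ T) :
    (PresentedGroup.of (rels := WRelators K T w A) ⟨(a, b), hav.trans hvb, k3⟩) ^ w s(a, b) =
      (PresentedGroup.of (rels := WRelators K T w A) ⟨(a, v), hav, k1⟩) ^ w s(a, v) *
      (PresentedGroup.of (rels := WRelators K T w A) ⟨(v, b), hvb, k2⟩) ^ w s(v, b) := by
  have h := wrel_one K T w A (Or.inr ⟨a, v, b, hav, hvb, k1, k2, k3, ht, rfl⟩)
  erw [map_mul, map_inv, map_mul, map_zpow, map_zpow, map_zpow, mul_inv_eq_one] at h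
  exact h

private lemma tri_sorted (hwsc : IsWSC K T w A) {t : Finset V} (ht : t ∈ T) :
    ∃ a v b : V, a < v ∧ v < b ∧ t = {a, v, b} ∧ K.Adj a v ∧ K.Adj v b ∧ K.Adj a b := by
  obtain ⟨a, v, b, hav, hvb, hab, rfl, k1, k2, k3⟩ := hwsc.tri _ ht
  rcases hav.lt_or_gt with hav | hav <;> rcases hvb.lt_or_gt with hvb | hvb <;>
    rcases hab.lt_or_gt with hab | hab
  · exact ⟨a, v, b, hav, hvb, by ext x; simp, k1, k2, k3⟩
  · exact absurd (hav.trans hvb) (lt_asymm hab)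
  · exact ⟨a, b, v, hab, hvb, by ext x; simp; tauto, k3, k2.symm, k1⟩
  · exact ⟨b, a, v, hab, hav, by ext x; simp; tauto, k3.symm, k1, k2.symm⟩
  · exact ⟨v, a, b, hav, hab, by ext x; simp; tauto, k1.symm, k3, k2⟩
  · exact ⟨v, b, a, hvb, hab, by ext x; simp; tauto, k2, k3.symm, k1.symm⟩
  · exact absurd (hab.trans hvb) (lt_asymm hav)
  · exact ⟨b, v, a, hvb, hav, by ext x; simp; tauto, k2.symm, k1.symm, k3.symm⟩

private lemma two_of_three {p q r : Prop}
    (h : ((if p then 1 else 0) + (if q then 1 else 0) + (if r then 1 else 0) : ℕ) = 2) :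
    (¬p → q ∧ r) ∧ (¬q → p ∧ r) ∧ (¬r → p ∧ q) := by
  split_ifs at h <;> first | omega | tauto

private lemma tri_pow_one (hwsc : IsWSC K T w A) (h2 : ExactlyTwo T A) (e : WGen K)
    (hA : ¬ A.Adj e.1.1 e.1.2) {t : Finset V} (ht : t ∈ T)
    (he1 : e.1.1 ∈ t) (he2 : e.1.2 ∈ t) :
    (PresentedGroup.of (rels := WRelators K T w A) e) ^ w s(e.1.1, e.1.2) = 1 := by
  obtain ⟨a, v, b, hav, hvb, rfl, k1, k2, k3⟩ := tri_sorted K T w A hwsc ht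
  have hrel := tri_rel K T w A hav hvb k1 k2 k3 ht
  have hsum := h2 a v b hav hvb ht
  have hlt := e.2.1
  simp only [Finset.mem_insert, Finset.mem_singleton] at he1 he2
  rcases he1 with h1 | h1 | h1 <;> rcases he2 with h2' | h2' | h2'
  · rw [h1, h2'] at hlt; exact absurd hlt (lt_irrefl a)
  · rw [h1, h2'] at hA ⊢
    rw [show e = (⟨(a, v), hav, k1⟩ : WGen K) from Subtype.ext (show e.1 = (a, v) by rw [← h1, ← h2'])]
    obtain ⟨hp, hr⟩ := (two_of_three hsum).2.1 hA
    rw [tree_pow_one K T w A (hav.trans hvb) k3 hp, tree_pow_one K T w A hvb k2 hr] at hrel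
    simpa using hrel.symm
  · rw [h1, h2'] at hA ⊢
    rw [show e = (⟨(a, b), hav.trans hvb, k3⟩ : WGen K) from Subtype.ext (show e.1 = (a, b) by rw [← h1, ← h2'])]
    obtain ⟨hq, hr⟩ := (two_of_three hsum).1 hA
    rw [tree_pow_one K T w A hav k1 hq, tree_pow_one K T w A hvb k2 hr] at hrel
    simpa using hrel
  · rw [h1, h2'] at hlt; exact absurd (hlt.trans hav) (lt_irrefl v)
  · rw [h1, h2'] at hlt; exact absurd hlt (lt_irrefl v)
  · rw [h1, h2'] at hA ⊢
    rw [show e = (⟨(v, b), hvb, k2⟩ : WGen K) from Subtype.ext (show e.1 = (v, b) by rw [← h1, ← h2'])]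
    obtain ⟨hp, hq⟩ := (two_of_three hsum).2.2 hA
    rw [tree_pow_one K T w A (hav.trans hvb) k3 hp, tree_pow_one K T w A hav k1 hq] at hrel
    simpa using hrel.symm
  · rw [h1, h2'] at hlt; exact absurd ((hav.trans hvb).trans hlt) (lt_irrefl a)
  · rw [h1, h2'] at hlt; exact absurd (hvb.trans hlt) (lt_irrefl v)
  · rw [h1, h2'] at hlt; exact absurd hlt (lt_irrefl b)

private lemma of_pow_facMod (hwsc : IsWSC K T w A) (h2 : ExactlyTwo T A) (e : WGen K) :
    (PresentedGroup.of (rels := WRelators K T w A) e) ^ ((facMod K T w A e : ℤ)) = 1 := by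
  by_cases hA : A.Adj e.1.1 e.1.2
  · rw [show facMod K T w A e = (w s(e.1.1, e.1.2)).natAbs from by
      unfold facMod; rw [if_pos hA]]
    exact pow_natAbs (tree_pow_one K T w A e.2.1 e.2.2 hA)
  · by_cases hT : ∃ t ∈ T, e.1.1 ∈ t ∧ e.1.2 ∈ t
    · obtain ⟨t, ht, he1, he2⟩ := hT
      rw [show facMod K T w A e = (w s(e.1.1, e.1.2)).natAbs from by
        unfold facMod; rw [if_neg hA, if_pos ⟨t, ht, he1, he2⟩]]
      exact pow_natAbs (tri_pow_one K T w A hwsc h2 e hA ht he1 he2)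
    · rw [show facMod K T w A e = 0 from by unfold facMod; rw [if_neg hA, if_neg hT]]
      simp

private noncomputable def Ffun : WGen K →
    Monoid.CoprodI (fun e : WGen K => Multiplicative (ZMod (facMod K T w A e))) :=
  fun e => Monoid.CoprodI.of (Multiplicative.ofAdd (1 : ZMod (facMod K T w A e)))

private lemma lift_pow {x y : V} (hxy : x < y) (hK : K.Adj x y)
    (heq : facMod K T w A ⟨(x, y), hxy, hK⟩ = (w s(x, y)).natAbs) :
    FreeGroup.lift (Ffun K T w A) (FreeGroup.of (⟨(x, y), hxy, hK⟩ : WGen K) ^ w s(x, y)) = 1 := by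
  have h0 : ((w s(x, y) : ℤ) : ZMod (facMod K T w A ⟨(x, y), hxy, hK⟩)) = 0 := by
    rw [ZMod.intCast_zmod_eq_zero_iff_dvd, heq]
    exact Int.natAbs_dvd.mpr dvd_rfl
  erw [map_zpow, FreeGroup.lift_apply_of]
  show (Monoid.CoprodI.of (M := fun e : WGen K => Multiplicative (ZMod (facMod K T w A e)))
    (Multiplicative.ofAdd (1 : ZMod (facMod K T w A ⟨(x, y), hxy, hK⟩)))) ^ w s(x, y) = 1
  rw [← map_zpow, ← ofAdd_zsmul, zsmul_eq_mul, mul_one, h0, ofAdd_zero, map_one]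

private lemma relators_one :
    ∀ r ∈ WRelators K T w A, FreeGroup.lift (Ffun K T w A) r = 1 := by
  rintro r (⟨e, hA, rfl⟩ | ⟨a, v, b, hav, hvb, k1, k2, k3, ht, rfl⟩)
  · have heq : facMod K T w A ⟨(e.1.1, e.1.2), e.2.1, e.2.2⟩ = (w s(e.1.1, e.1.2)).natAbs := by
      unfold facMod; rw [if_pos hA]
    exact lift_pow K T w A e.2.1 e.2.2 heq
  · have hfac : ∀ (x y : V) (hxy : x < y) (hK : K.Adj x y),
        x ∈ ({a, v, b} : Finset V) → y ∈ ({a, v, b} : Finset V) →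
        facMod K T w A ⟨(x, y), hxy, hK⟩ = (w s(x, y)).natAbs := by
      intro x y hxy hK hx hy
      unfold facMod
      split_ifs with p q
      · rfl
      · rfl
      · exact absurd ⟨{a, v, b}, ht, hx, hy⟩ q
    erw [map_mul, map_inv, map_mul,
        lift_pow K T w A (hav.trans hvb) k3 (hfac a b (hav.trans hvb) k3 (by simp) (by simp)),
        lift_pow K T w A hav k1 (hfac a v hav k1 (by simp) (by simp)),
        lift_pow K T w A hvb k2 (hfac v b hvb k2 (by simp) (by simp))]
    simp

private lemma zmod_hom_int {G : Type*} [Group G] {n : ℕ}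
    (f : { f : ℤ →+ Additive G // f n = 0 }) (z : ℤ) :
    AddMonoidHom.toMultiplicativeLeft (ZMod.lift n f) (Multiplicative.ofAdd ((z : ZMod n))) =
      Additive.toMul (f.1 z) := by
  show Additive.toMul ((ZMod.lift n f) ((z : ZMod n))) = _
  rw [ZMod.lift_coe]

private noncomputable def homE (hwsc : IsWSC K T w A) (h2 : ExactlyTwo T A) (e : WGen K) :
    Multiplicative (ZMod (facMod K T w A e)) →* PresentedGroup (WRelators K T w A) :=
  AddMonoidHom.toMultiplicativeLeft
    (ZMod.lift (facMod K T w A e)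
      ⟨zmultiplesHom _ (Additive.ofMul (PresentedGroup.of e)), by
        show ((facMod K T w A e : ℤ)) •
            Additive.ofMul (PresentedGroup.of (rels := WRelators K T w A) e) = 0
        rw [← ofMul_zpow, of_pow_facMod K T w A hwsc h2 e]
        exact ofMul_one⟩)

private lemma homE_int (hwsc : IsWSC K T w A) (h2 : ExactlyTwo T A) (e : WGen K) (z : ℤ) :
    homE K T w A hwsc h2 e (Multiplicative.ofAdd ((z : ZMod (facMod K T w A e)))) =
      PresentedGroup.of e ^ z := by
  unfold homE
  rw [zmod_hom_int]
  show Additive.toMul (z • Additive.ofMul (PresentedGroup.of (rels := WRelators K T w A) e)) = _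
  rw [← ofMul_zpow]
  rfl

end AuxProof

/-- Theorem 2.8 of the paper. If the WSC `(K, T, w, A)` satisfies the
exactly-two condition, then `π₁(K, w, A)` is isomorphic to the free product, over the edges
`ab` of `K`, of `ℤ/w(ab)` if `ab ∈ A`, of `ℤ/w(ab)` if `ab ∉ A` but `ab` is an edge of some
2-simplex of `T`, and of `ℤ` otherwise. -/
theorem weighted_pi1_exactly_two [LinearOrder V] (K : SimpleGraph V) (T : Set (Finset V))
    (w : Sym2 V → ℤ) (A : SimpleGraph V) (hwsc : IsWSC K T w A) (h2 : ExactlyTwo T A) :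
    Nonempty (wpi1 K T w A ≃*
      Monoid.CoprodI (fun e : WGen K => Multiplicative (ZMod (facMod K T w A e)))) := by
  set Psi : PresentedGroup (WRelators K T w A) →*
      Monoid.CoprodI (fun e : WGen K => Multiplicative (ZMod (facMod K T w A e))) :=
    PresentedGroup.toGroup (relators_one K T w A) with hPsi
  set Phi : Monoid.CoprodI (fun e : WGen K => Multiplicative (ZMod (facMod K T w A e))) →*
      PresentedGroup (WRelators K T w A) :=
    Monoid.CoprodI.lift (homE K T w A hwsc h2) with hPhi
  have hcomp1 : Phi.comp Psi = MonoidHom.id _ := by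
    apply PresentedGroup.ext
    intro x
    rw [MonoidHom.comp_apply, MonoidHom.id_apply, hPsi, PresentedGroup.toGroup.of, hPhi]
    show Monoid.CoprodI.lift (homE K T w A hwsc h2)
      (Monoid.CoprodI.of (M := fun e : WGen K => Multiplicative (ZMod (facMod K T w A e)))
        (Multiplicative.ofAdd (1 : ZMod (facMod K T w A x)))) = _
    rw [Monoid.CoprodI.lift_of,
      show (1 : ZMod (facMod K T w A x)) = ((1 : ℤ) : ZMod (facMod K T w A x)) by push_cast; rfl,
      homE_int K T w A hwsc h2 x 1, zpow_one]
  have hcomp2 : Psi.comp Phi = MonoidHom.id _ := by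
    apply Monoid.CoprodI.ext_hom
    intro e
    apply MonoidHom.ext
    intro x
    obtain ⟨z, hz⟩ := ZMod.intCast_surjective (Multiplicative.toAdd x)
    have hx : x = Multiplicative.ofAdd ((z : ZMod (facMod K T w A e))) := by rw [hz]; rfl
    simp only [MonoidHom.comp_apply, MonoidHom.id_apply]
    rw [hx, hPhi, Monoid.CoprodI.lift_of, homE_int K T w A hwsc h2 e z, hPsi, map_zpow,
      PresentedGroup.toGroup.of]
    show (Monoid.CoprodI.of (M := fun e : WGen K => Multiplicative (ZMod (facMod K T w A e)))
        (Multiplicative.ofAdd (1 : ZMod (facMod K T w A e)))) ^ z =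
      Monoid.CoprodI.of (M := fun e : WGen K => Multiplicative (ZMod (facMod K T w A e)))
        (Multiplicative.ofAdd ((z : ZMod (facMod K T w A e))))
    rw [← map_zpow, ← ofAdd_zsmul, zsmul_eq_mul, mul_one]
  exact ⟨MonoidHom.toMulEquiv Psi Phi hcomp1 hcomp2⟩
end

section
/- Let (K, T, w, A) be a WSC satisfying the exactly-two condition, and let w' be another weight function on the edges of K such that for every edge ab, either w'(ab) = w(ab) or w'(ab) = −w(ab). Then π₁(K, w, A) is isomorphic to π₁(K, w', A). -/
open scoped Classical

variable {V : Type*}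

/- Replacing each generator `g_e` by `g_e^{±1}`, with the sign relating `w'(e)` to `w(e)`, is an
involutive automorphism of the free group. Since the relators only involve the powers `g_e^{w(e)}`, it
carries the relators for `w` exactly onto those for `w'`. -/

namespace PresentedGroup

variable {α β : Type*}

def equivOfImageEq {s : Set (FreeGroup α)} {t : Set (FreeGroup β)}
    (e : FreeGroup α ≃* FreeGroup β) (h : e '' s = t) : PresentedGroup s ≃* PresentedGroup t :=
  QuotientGroup.congr _ _ e (h ▸ Subgroup.map_normalClosure s e.toMonoidHom e.surjective)

end PresentedGroup

namespace FreeGroup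

variable {α : Type*}

theorem lift_zpow_units_comp_self (ε : α → ℤˣ) :
    (lift fun a => of a ^ (ε a : ℤ)).comp (lift fun a => of a ^ (ε a : ℤ)) = .id _ := by
  ext a
  simp [← zpow_mul, ← Units.val_mul, Int.units_mul_self]

def zpowUnitsEquiv (ε : α → ℤˣ) : FreeGroup α ≃* FreeGroup α :=
  MonoidHom.toMulEquiv _ _ (lift_zpow_units_comp_self ε) (lift_zpow_units_comp_self ε)

theorem zpowUnitsEquiv_involutive (ε : α → ℤˣ) : Function.Involutive (zpowUnitsEquiv ε) :=
  (zpowUnitsEquiv ε).symm_apply_apply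

theorem zpowUnitsEquiv_of_zpow (ε : α → ℤˣ) (a : α) (n : ℤ) :
    zpowUnitsEquiv ε (of a ^ n) = of a ^ (n * ε a) := by
  simp [zpowUnitsEquiv, zpow_mul']

end FreeGroup

open FreeGroup

section SignTwist

variable [LinearOrder V] {K : SimpleGraph V} {T : Set (Finset V)} {A : SimpleGraph V}

theorem mapsTo_zpowUnitsEquiv_wRelators {w w' : Sym2 V → ℤ} {ε : WGen K → ℤˣ}
    (hε : ∀ e : WGen K, w s(e.1.1, e.1.2) * ε e = w' s(e.1.1, e.1.2)) :
    Set.MapsTo (zpowUnitsEquiv ε) (WRelators K T w A) (WRelators K T w' A) := by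
  have hgen (e : WGen K) :
      zpowUnitsEquiv ε (of e ^ w s(e.1.1, e.1.2)) = of e ^ w' s(e.1.1, e.1.2) := by
    rw [zpowUnitsEquiv_of_zpow, hε]
  rintro r (⟨e, he, rfl⟩ | ⟨a, v, b, hav, hvb, hKav, hKvb, hKab, hT, rfl⟩)
  · exact Or.inl ⟨e, he, hgen e⟩
  · refine Or.inr ⟨a, v, b, hav, hvb, hKav, hKvb, hKab, hT, ?_⟩
    -- the triangle relator is elaborated over the subtype underlying `WGen K`, out of `simp`'s reach
    have hgen₃ (x y z : WGen K) : zpowUnitsEquiv ε (of x ^ w s(x.1.1, x.1.2) *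
        (of y ^ w s(y.1.1, y.1.2) * of z ^ w s(z.1.1, z.1.2))⁻¹) =
        of x ^ w' s(x.1.1, x.1.2) * (of y ^ w' s(y.1.1, y.1.2) * of z ^ w' s(z.1.1, z.1.2))⁻¹ := by
      simp only [_root_.map_mul, _root_.map_inv, hgen]
    exact hgen₃ _ _ _

theorem zpowUnitsEquiv_image_wRelators {w w' : Sym2 V → ℤ} {ε : WGen K → ℤˣ}
    (hε : ∀ e : WGen K, w s(e.1.1, e.1.2) * ε e = w' s(e.1.1, e.1.2)) :
    zpowUnitsEquiv ε '' WRelators K T w A = WRelators K T w' A := by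
  have hε' : ∀ e : WGen K, w' s(e.1.1, e.1.2) * ε e = w s(e.1.1, e.1.2) := fun e => by
    rw [← hε, mul_assoc, ← Units.val_mul, Int.units_mul_self, Units.val_one, mul_one]
  refine (mapsTo_zpowUnitsEquiv_wRelators hε).image_subset.antisymm fun r hr => ?_
  exact ⟨_, mapsTo_zpowUnitsEquiv_wRelators hε' hr, zpowUnitsEquiv_involutive ε r⟩

end SignTwist

theorem weighted_pi1_sign_invariant_general [LinearOrder V] (K : SimpleGraph V) (T : Set (Finset V))
    (w w' : Sym2 V → ℤ) (A : SimpleGraph V)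
    (hw' : ∀ a b : V, K.Adj a b → w' s(a, b) = w s(a, b) ∨ w' s(a, b) = -w s(a, b)) :
    Nonempty (wpi1 K T w A ≃* wpi1 K T w' A) := by
  choose ε hε using fun e : WGen K => (Int.associated_iff.mpr (hw' _ _ e.2.2)).symm
  exact ⟨PresentedGroup.equivOfImageEq _ (zpowUnitsEquiv_image_wRelators hε)⟩

/-- Corollary 2.9. If `(K, T, w, A)` satisfies the exactly-two condition and
`w'` agrees with `w` up to sign on every edge of `K`, then `π₁(K, w, A) ≅ π₁(K, w', A)`. -/
theorem weighted_pi1_sign_invariant [LinearOrder V] (K : SimpleGraph V) (T : Set (Finset V))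
    (w w' : Sym2 V → ℤ) (A : SimpleGraph V) (hwsc : IsWSC K T w A) (h2 : ExactlyTwo T A)
    (hw' : ∀ a b : V, K.Adj a b → w' s(a, b) = w s(a, b) ∨ w' s(a, b) = -w s(a, b)) :
    Nonempty (wpi1 K T w A ≃* wpi1 K T w' A) :=
  weighted_pi1_sign_invariant_general K T w w' A hw'
end

section
/- Let (K, T, w, A) be a WSC satisfying the exactly-two condition, and suppose w(ab) = 1 or w(ab) = −1 for every edge ab of K. Then π₁(K, w, A) is isomorphic to π₁(K, 𝟙, A), where 𝟙 is the constant weight function assigning 1 to every edge (the group that the paper identifies with the ordinary fundamental group of K). -/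
/-!
A weight `±1` on an edge only replaces the generator `g_e` by `g_e⁻¹`. Accordingly, the
automorphism `g_e ↦ g_e ^ w(e)` of the free group on the edges is an involution carrying the
relators of `π₁(K, 𝟙, A)` exactly onto those of `π₁(K, w, A)`, and it descends to an
isomorphism of the presented groups.
-/

open scoped Classical

variable {V : Type*}

namespace FreeGroup

variable {α : Type*}

def signFlip (ε : α → ℤˣ) : FreeGroup α ≃* FreeGroup α :=
  have involutive : (lift fun a => of a ^ (ε a : ℤ)).comp (lift fun a => of a ^ (ε a : ℤ)) =
      MonoidHom.id _ :=
    ext_hom _ _ fun a => by simp [← zpow_mul]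
  MonoidHom.toMulEquiv _ _ involutive involutive

lemma signFlip_of_zpow (ε : α → ℤˣ) (a : α) (n : ℤ) :
    signFlip ε (of a ^ n) = of a ^ (ε a * n) := by
  rw [map_zpow, zpow_mul]
  exact congrArg (· ^ n) lift_apply_of

lemma signFlip_symm (ε : α → ℤˣ) : (signFlip ε).symm = signFlip ε :=
  rfl

end FreeGroup

namespace PresentedGroup

variable {α β : Type*} {s : Set (FreeGroup α)} {t : Set (FreeGroup β)}

def equivOfMapsTo (e : FreeGroup α ≃* FreeGroup β) (hst : s.MapsTo e t)
    (hts : t.MapsTo e.symm s) : PresentedGroup s ≃* PresentedGroup t :=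
  MonoidHom.toMulEquiv (PresentedGroup.map e hst) (PresentedGroup.map e.symm hts)
    (ext fun _ => congrArg (mk s) (e.symm_apply_apply _))
    (ext fun _ => congrArg (mk t) (e.apply_symm_apply _))

end PresentedGroup

section SignChange

variable [LinearOrder V] {K : SimpleGraph V} {T : Set (Finset V)} {A : SimpleGraph V}
  {w₁ w₂ : Sym2 V → ℤ}

lemma signFlip_mapsTo_wRelators (ε : WGen K → ℤˣ)
    (h : ∀ e : WGen K, ε e * w₁ s(e.1.1, e.1.2) = w₂ s(e.1.1, e.1.2)) :
    (WRelators K T w₁ A).MapsTo (FreeGroup.signFlip ε) (WRelators K T w₂ A) := by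
  let g (x y : V) (hxy : x < y ∧ K.Adj x y) : FreeGroup (WGen K) := .of ⟨(x, y), hxy⟩
  have flip_pow (x y : V) (hxy : x < y ∧ K.Adj x y) :
      FreeGroup.signFlip ε (g x y hxy ^ w₁ s(x, y)) = g x y hxy ^ w₂ s(x, y) :=
    (FreeGroup.signFlip_of_zpow ε _ _).trans (congrArg (g x y hxy ^ ·) (h ⟨(x, y), hxy⟩))
  rintro r (⟨⟨⟨x, y⟩, hxy⟩, hA, rfl⟩ | ⟨a, v, b, hav, hvb, h1, h2, h3, hT, rfl⟩)
  · exact Or.inl ⟨_, hA, flip_pow x y hxy⟩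
  · refine Or.inr ⟨a, v, b, hav, hvb, h1, h2, h3, hT, ?_⟩
    -- `WRelators` types these generators by the subtype underlying `WGen K`, which blocks `rw`.
    change FreeGroup.signFlip ε
        (g a b _ ^ w₁ s(a, b) * (g a v _ ^ w₁ s(a, v) * g v b _ ^ w₁ s(v, b))⁻¹) =
      g a b _ ^ w₂ s(a, b) * (g a v _ ^ w₂ s(a, v) * g v b _ ^ w₂ s(v, b))⁻¹
    rw [map_mul, map_inv, map_mul, flip_pow, flip_pow, flip_pow]

def wpi1SignChangeEquiv (ε : WGen K → ℤˣ)
    (h : ∀ e : WGen K, ε e * w₁ s(e.1.1, e.1.2) = w₂ s(e.1.1, e.1.2)) :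
    wpi1 K T w₁ A ≃* wpi1 K T w₂ A :=
  PresentedGroup.equivOfMapsTo (FreeGroup.signFlip ε) (signFlip_mapsTo_wRelators ε h) <| by
    rw [FreeGroup.signFlip_symm]
    refine signFlip_mapsTo_wRelators ε fun e => ?_
    rw [← h, ← mul_assoc, ← Units.val_mul, Int.units_mul_self, Units.val_one, one_mul]

end SignChange

theorem weighted_pi1_pm_one_general [LinearOrder V] (K : SimpleGraph V) (T : Set (Finset V))
    (w : Sym2 V → ℤ) (A : SimpleGraph V)
    (hw : ∀ a b : V, K.Adj a b → w s(a, b) = 1 ∨ w s(a, b) = -1) :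
    Nonempty (wpi1 K T w A ≃* wpi1 K T (fun _ => 1) A) := by
  have hunit (e : WGen K) : IsUnit (w s(e.1.1, e.1.2)) :=
    Int.isUnit_iff.mpr (hw _ _ e.2.2)
  refine ⟨wpi1SignChangeEquiv (fun e => (hunit e).unit) fun e => ?_⟩
  rw [IsUnit.unit_spec, Int.isUnit_mul_self (hunit e)]

/-- Corollary 2.10. If `(K, T, w, A)` satisfies the exactly-two condition and
every weight is `1` or `-1`, then `π₁(K, w, A)` is isomorphic to `π₁(K, 𝟙, A)` where `𝟙` is
the constant weight function `1` (the group that the paper identifies with the ordinary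
fundamental group of `K`). -/
theorem weighted_pi1_pm_one [LinearOrder V] (K : SimpleGraph V) (T : Set (Finset V))
    (w : Sym2 V → ℤ) (A : SimpleGraph V) (hwsc : IsWSC K T w A) (h2 : ExactlyTwo T A)
    (hw : ∀ a b : V, K.Adj a b → w s(a, b) = 1 ∨ w s(a, b) = -1) :
    Nonempty (wpi1 K T w A ≃* wpi1 K T (fun _ => 1) A) :=
  weighted_pi1_pm_one_general K T w A hw
end

section
/- Let K be a connected simple graph on a linearly ordered vertex type V, let T be a set of 2-simplices of K, and let w be the constant weight function assigning 1 to every edge of K. Then for any two spanning trees A and B of K, the weighted fundamental groups π₁(K, w, A) and π₁(K, w, B) (both formed with the same T) are isomorphic. -/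
open scoped Classical

variable {V : Type*}

/-!
Write `e_{uv}` for the image of `g_{uv}` in `π₁(K, 𝟙, B)` (and `e_{vu} = e_{uv}⁻¹`).
Fixing a base vertex `v₀`, let `φ(v)` be the product of the `e` along the path from `v₀` to `v`
in the tree `A`. The gauge-transformed labels `φ(u) e_{uv} φ(v)⁻¹` still satisfy the triangle
relations and are trivial on the edges of `A`, so they define a homomorphism
`π₁(K, 𝟙, A) → π₁(K, 𝟙, B)`. Exchanging `A` and `B` gives a map back; the composite fixes every
generator because a potential on `A` (a `χ` with `χ(v) = χ(u) f_{uv}` along the edges of `A`)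
is determined by its value at `v₀`.
-/

namespace SimpleGraph

variable {G : SimpleGraph V} {Γ : Type*} [Group Γ]

namespace Walk

def labelProd (f : ∀ ⦃u v : V⦄, G.Adj u v → Γ) : ∀ {u v : V}, G.Walk u v → Γ
  | _, _, nil => 1
  | _, _, cons h p => f h * labelProd f p

variable (f : ∀ ⦃u v : V⦄, G.Adj u v → Γ)

@[simp] lemma labelProd_nil {u : V} : (nil : G.Walk u u).labelProd f = 1 := rfl

@[simp] lemma labelProd_cons {u v w : V} (h : G.Adj u v) (p : G.Walk v w) :
    (cons h p).labelProd f = f h * p.labelProd f := rfl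

lemma labelProd_concat {u v w : V} (p : G.Walk u v) (h : G.Adj v w) :
    (p.concat h).labelProd f = p.labelProd f * f h := by
  induction p with
  | nil => simp [concat]
  | cons h' p ih => simp [concat_cons, ih, mul_assoc]

end Walk

def IsPotential (f : ∀ ⦃u v : V⦄, G.Adj u v → Γ) (φ : V → Γ) : Prop :=
  ∀ ⦃u v : V⦄ (h : G.Adj u v), φ v = φ u * f h

lemma IsPotential.eq_of_preconnected {f : ∀ ⦃u v : V⦄, G.Adj u v → Γ} {φ χ : V → Γ}
    (hG : G.Preconnected) (hφ : IsPotential f φ) (hχ : IsPotential f χ) {v₀ : V}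
    (h₀ : φ v₀ = χ v₀) : φ = χ := by
  have along : ∀ {u v : V} (p : G.Walk u v), φ u = χ u → φ v = χ v := by
    intro u v p
    induction p with
    | nil => exact id
    | cons h _ ih => exact fun hu => ih (by rw [hφ h, hχ h, hu])
  exact funext fun v => along (hG v₀ v).some h₀

noncomputable def IsTree.potential (hG : G.IsTree) (f : ∀ ⦃u v : V⦄, G.Adj u v → Γ) (v₀ v : V) :
    Γ :=
  (hG.existsUnique_path v₀ v).exists.choose.labelProd f

lemma IsTree.potential_self (hG : G.IsTree) (f : ∀ ⦃u v : V⦄, G.Adj u v → Γ) (v₀ : V) :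
    hG.potential f v₀ v₀ = 1 := by
  have hp := (hG.existsUnique_path v₀ v₀).exists.choose_spec
  rw [potential, (hG.existsUnique_path v₀ v₀).unique hp Walk.IsPath.nil, Walk.labelProd_nil]

lemma IsTree.isPotential_potential (hG : G.IsTree) {f : ∀ ⦃u v : V⦄, G.Adj u v → Γ}
    (hf : ∀ {u v : V} (h : G.Adj u v), f h.symm = (f h)⁻¹) (v₀ : V) :
    IsPotential f (hG.potential f v₀) := by
  intro a b hab
  have hp := (hG.existsUnique_path v₀ a).exists.choose_spec
  have hq := (hG.existsUnique_path v₀ b).exists.choose_spec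
  unfold potential
  generalize (hG.existsUnique_path v₀ a).exists.choose = p at hp ⊢
  generalize (hG.existsUnique_path v₀ b).exists.choose = q at hq ⊢
  by_cases ha : a ∈ q.support
  · rw [hG.isAcyclic.path_concat hp hq hab ha, Walk.labelProd_concat]
  · have hb := hG.isAcyclic.mem_support_of_ne_mem_support_of_adj_of_isPath hp hq hab ha
    rw [hG.isAcyclic.path_concat hq hp hab.symm hb, Walk.labelProd_concat, hf hab,
      inv_mul_cancel_right]

def gaugeTransform (φ : V → Γ) (f : ∀ ⦃u v : V⦄, G.Adj u v → Γ) : ∀ ⦃u v : V⦄, G.Adj u v → Γ :=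
  fun u v h => φ u * f h * (φ v)⁻¹

lemma gaugeTransform_symm (φ : V → Γ) {f : ∀ ⦃u v : V⦄, G.Adj u v → Γ}
    (hf : ∀ {u v : V} (h : G.Adj u v), f h.symm = (f h)⁻¹) {u v : V} (h : G.Adj u v) :
    gaugeTransform φ f h.symm = (gaugeTransform φ f h)⁻¹ := by
  simp [gaugeTransform, hf h, mul_assoc]

lemma gaugeTransform_eq_one_of_isPotential {H : SimpleGraph V} (hHG : H ≤ G) {φ : V → Γ}
    {f : ∀ ⦃u v : V⦄, G.Adj u v → Γ} (hφ : IsPotential (fun _ _ h => f (hHG h)) φ) {u v : V}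
    (h : H.Adj u v) : gaugeTransform φ f (hHG h) = 1 := by
  simp [gaugeTransform, hφ h]

end SimpleGraph

section

open SimpleGraph

variable [LinearOrder V] {K : SimpleGraph V} {Γ : Type*} [Group Γ]

def IsCocycle (T : Set (Finset V)) (f : ∀ ⦃u v : V⦄, K.Adj u v → Γ) : Prop :=
  ∀ ⦃a v b : V⦄, a < v → v < b → ∀ (h₁ : K.Adj a v) (h₂ : K.Adj v b) (h₃ : K.Adj a b),
    ({a, v, b} : Finset V) ∈ T → f h₃ = f h₁ * f h₂

lemma IsCocycle.gaugeTransform {T : Set (Finset V)} {f : ∀ ⦃u v : V⦄, K.Adj u v → Γ}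
    (hf : IsCocycle T f) (φ : V → Γ) : IsCocycle T (SimpleGraph.gaugeTransform φ f) := by
  intro a v b hav hvb h₁ h₂ h₃ hT
  simp [SimpleGraph.gaugeTransform, hf hav hvb h₁ h₂ h₃ hT, mul_assoc]

namespace wpi1

variable {T : Set (Finset V)} {A : SimpleGraph V}

variable (T A) in
def of (e : WGen K) : wpi1 K T (fun _ => 1) A :=
  PresentedGroup.of e

lemma of_eq_one {e : WGen K} (he : A.Adj e.1.1 e.1.2) : of T A e = 1 :=
  PresentedGroup.one_of_mem (Or.inl ⟨e, he, (zpow_one _).symm⟩)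

lemma of_eq_of_mul_of {a v b : V} (hav : a < v) (hvb : v < b) (h₁ : K.Adj a v)
    (h₂ : K.Adj v b) (h₃ : K.Adj a b) (hmem : ({a, v, b} : Finset V) ∈ T) :
    of T A ⟨(a, b), hav.trans hvb, h₃⟩ = of T A ⟨(a, v), hav, h₁⟩ * of T A ⟨(v, b), hvb, h₂⟩ :=
  PresentedGroup.mk_eq_mk_of_mul_inv_mem
    (Or.inr ⟨a, v, b, hav, hvb, h₁, h₂, h₃, hmem, by simp only [zpow_one]; rfl⟩)

def lift (f : ∀ ⦃u v : V⦄, K.Adj u v → Γ)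
    (hA : ∀ {u v : V} (h : K.Adj u v), A.Adj u v → f h = 1) (hT : IsCocycle T f) :
    wpi1 K T (fun _ => 1) A →* Γ :=
  PresentedGroup.toGroup (f := fun e : WGen K => f e.2.2) <| by
    rintro r (⟨e, he, rfl⟩ | ⟨a, v, b, hav, hvb, h₁, h₂, h₃, hmem, rfl⟩)
    · simp [hA _ he]
    · simp only [zpow_one]
      -- `WRelators` builds its generators as terms of the subtype underlying `WGen K`,
      -- so these rewrites only match up to unfolding `WGen`.
      erw [map_mul, map_inv, map_mul, FreeGroup.lift_apply_of, FreeGroup.lift_apply_of,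
        FreeGroup.lift_apply_of]
      rw [hT hav hvb h₁ h₂ h₃ hmem, mul_inv_cancel]

lemma lift_of (f : ∀ ⦃u v : V⦄, K.Adj u v → Γ)
    (hA : ∀ {u v : V} (h : K.Adj u v), A.Adj u v → f h = 1) (hT : IsCocycle T f) (e : WGen K) :
    lift f hA hT (of T A e) = f e.2.2 :=
  PresentedGroup.toGroup.of _

variable (K T A) in
noncomputable def edgeLabel ⦃u v : V⦄ (h : K.Adj u v) : wpi1 K T (fun _ => 1) A :=
  if huv : u < v then of T A ⟨(u, v), huv, h⟩
  else (of T A ⟨(v, u), lt_of_le_of_ne (not_lt.mp huv) h.ne', h.symm⟩)⁻¹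

lemma edgeLabel_of_lt {u v : V} (huv : u < v) (h : K.Adj u v) :
    edgeLabel K T A h = of T A ⟨(u, v), huv, h⟩ :=
  dif_pos huv

lemma edgeLabel_symm {u v : V} (h : K.Adj u v) :
    edgeLabel K T A h.symm = (edgeLabel K T A h)⁻¹ := by
  rcases lt_or_gt_of_ne h.ne with huv | hvu
  · simp [edgeLabel, huv, huv.not_gt]
  · simp [edgeLabel, hvu, hvu.not_gt]

lemma edgeLabel_eq_one {u v : V} (h : K.Adj u v) (hA : A.Adj u v) : edgeLabel K T A h = 1 := by
  rcases lt_or_gt_of_ne h.ne with huv | hvu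
  · exact (edgeLabel_of_lt huv h).trans (of_eq_one hA)
  · rw [edgeLabel_symm h.symm, edgeLabel_of_lt hvu, inv_eq_one]
    exact of_eq_one hA.symm

lemma isCocycle_edgeLabel : IsCocycle T (edgeLabel K T A) := by
  intro a v b hav hvb h₁ h₂ h₃ hmem
  rw [edgeLabel_of_lt hav, edgeLabel_of_lt hvb, edgeLabel_of_lt (hav.trans hvb),
    of_eq_of_mul_of hav hvb h₁ h₂ h₃ hmem]

lemma lift_edgeLabel {f : ∀ ⦃u v : V⦄, K.Adj u v → Γ}
    (hf : ∀ {u v : V} (h : K.Adj u v), f h.symm = (f h)⁻¹)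
    (hA : ∀ {u v : V} (h : K.Adj u v), A.Adj u v → f h = 1) (hT : IsCocycle T f)
    {u v : V} (h : K.Adj u v) : lift f hA hT (edgeLabel K T A h) = f h := by
  rcases lt_or_gt_of_ne h.ne with huv | hvu
  · rw [edgeLabel_of_lt huv]
    exact lift_of f hA hT ⟨(u, v), huv, h⟩
  · rw [edgeLabel_symm h.symm, edgeLabel_of_lt hvu, map_inv,
      lift_of f hA hT ⟨(v, u), hvu, h.symm⟩, hf, inv_inv]

variable {B : SimpleGraph V}

variable (T B) in
noncomputable def treePotential (hA : A.IsTree) (hAK : A ≤ K) (v₀ : V) :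
    V → wpi1 K T (fun _ => 1) B :=
  hA.potential (fun _ _ h => edgeLabel K T B (hAK h)) v₀

lemma isPotential_treePotential (hA : A.IsTree) (hAK : A ≤ K) (v₀ : V) :
    IsPotential (fun _ _ h => edgeLabel K T B (hAK h)) (treePotential T B hA hAK v₀) :=
  hA.isPotential_potential (fun h => edgeLabel_symm (hAK h)) v₀

lemma treePotential_self (hA : A.IsTree) (hAK : A ≤ K) (v₀ : V) :
    treePotential T B hA hAK v₀ v₀ = 1 :=
  hA.potential_self _ v₀

lemma gaugeTransform_treePotential_eq_one (hA : A.IsTree) (hAK : A ≤ K) (v₀ : V) {u v : V}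
    (h : K.Adj u v) (huv : A.Adj u v) :
    gaugeTransform (treePotential T B hA hAK v₀) (edgeLabel K T B) h = 1 :=
  gaugeTransform_eq_one_of_isPotential hAK (isPotential_treePotential hA hAK v₀) huv

variable (T) in
noncomputable def transfer (hA : A.IsTree) (hAK : A ≤ K) (v₀ : V) :
    wpi1 K T (fun _ => 1) A →* wpi1 K T (fun _ => 1) B :=
  lift (gaugeTransform (treePotential T B hA hAK v₀) (edgeLabel K T B))
    (gaugeTransform_treePotential_eq_one hA hAK v₀) (isCocycle_edgeLabel.gaugeTransform _)

lemma transfer_edgeLabel (hA : A.IsTree) (hAK : A ≤ K) (v₀ : V) {u v : V} (h : K.Adj u v) :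
    transfer T hA hAK v₀ (edgeLabel K T A h) =
      gaugeTransform (treePotential T B hA hAK v₀) (edgeLabel K T B) h :=
  lift_edgeLabel (gaugeTransform_symm _ edgeLabel_symm) _ _ h

lemma transfer_treePotential (hA : A.IsTree) (hAK : A ≤ K) (hB : B.IsTree) (hBK : B ≤ K)
    (v₀ : V) (v : V) :
    transfer T hB hBK v₀ (treePotential T B hA hAK v₀ v) = (treePotential T A hB hBK v₀ v)⁻¹ := by
  refine congrFun (IsPotential.eq_of_preconnected (v₀ := v₀) hA.connected.preconnected
    (f := fun _ _ h => gaugeTransform (treePotential T A hB hBK v₀) (edgeLabel K T A) (hAK h))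
    (φ := fun v => transfer T hB hBK v₀ (treePotential T B hA hAK v₀ v))
    (χ := fun v => (treePotential T A hB hBK v₀ v)⁻¹) ?_ ?_ ?_) v
  · intro u v h
    simp only [isPotential_treePotential hA hAK v₀ h, map_mul, transfer_edgeLabel]
  · intro u v h
    simp [gaugeTransform, edgeLabel_eq_one (hAK h) h]
  · simp [treePotential_self]

theorem transfer_comp_transfer (hA : A.IsTree) (hAK : A ≤ K) (hB : B.IsTree) (hBK : B ≤ K)
    (v₀ : V) : (transfer T hB hBK v₀).comp (transfer T hA hAK v₀) = MonoidHom.id _ := by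
  refine PresentedGroup.ext fun ⟨(a, b), hab, h⟩ => ?_
  change transfer T hB hBK v₀ (transfer T hA hAK v₀ (of T A ⟨(a, b), hab, h⟩)) =
    of T A ⟨(a, b), hab, h⟩
  rw [← edgeLabel_of_lt hab h, transfer_edgeLabel, gaugeTransform, map_mul, map_mul, map_inv,
    transfer_edgeLabel, transfer_treePotential, transfer_treePotential, gaugeTransform]
  group

end wpi1

end

/-- Corollary 2.5. When all weights are `1`, the weighted fundamental group
is independent of the choice of spanning tree: for any two spanning trees `A`, `B` of `K`,
`π₁(K, 𝟙, A) ≅ π₁(K, 𝟙, B)`. -/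
theorem weighted_pi1_weight_one_tree_indep [LinearOrder V] (K : SimpleGraph V)
    (T : Set (Finset V)) (A B : SimpleGraph V)
    (hA : IsWSC K T (fun _ => 1) A) (hB : IsWSC K T (fun _ => 1) B) :
    Nonempty (wpi1 K T (fun _ => 1) A ≃* wpi1 K T (fun _ => 1) B) := by
  obtain ⟨v₀⟩ := hA.conn.nonempty
  exact ⟨MonoidHom.toMulEquiv
    (wpi1.transfer T hA.tree hA.le v₀) (wpi1.transfer T hB.tree hB.le v₀)
    (wpi1.transfer_comp_transfer hA.tree hA.le hB.tree hB.le v₀)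
    (wpi1.transfer_comp_transfer hB.tree hB.le hA.tree hA.le v₀)⟩
end

section
/- Let (K, w, A) be a weighted graph. Then π₁(K, w, A) is isomorphic to the free product (Monoid.CoprodI) of the family of cyclic groups indexed by the edges ab of K, where the factor at ab is ℤ if ab does not lie in A, and ℤ/w(ab) if ab lies in A. -/
open scoped Classical

variable {V : Type*}

/-- The modulus of the cyclic factor associated to an edge of a weighted graph:
`|w(ab)|` if `ab` lies in the tree `A`, and `0` otherwise (recall `ZMod 0 = ℤ`). -/
noncomputable def graphFacMod [LinearOrder V] (K : SimpleGraph V) (w : Sym2 V → ℤ)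
    (A : SimpleGraph V) (e : WGen K) : ℕ :=
  if A.Adj e.1.1 e.1.2 then (w s(e.1.1, e.1.2)).natAbs else 0

/-!
Without 2-simplices the only relators are `g_e ^ w(e)` for the tree edges `e`, and these generate
the same normal subgroup as the relators `g_e ^ m_e` with `m_e = |w(e)|` on tree edges and
`m_e = 0` off the tree. Hence `π₁(K, w, A) = ⟨g_e | g_e ^ m_e⟩`, which is the standard presentation
of the free product of the cyclic groups `ℤ/m_e`.
-/

open Monoid (CoprodI)

theorem Subgroup.zpow_natAbs_mem_iff {G : Type*} [Group G] {H : Subgroup G} {g : G} {n : ℤ} :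
    g ^ (n.natAbs : ℤ) ∈ H ↔ g ^ n ∈ H := by
  obtain ⟨k, rfl | rfl⟩ := Int.eq_nat_or_neg n <;> simp [zpow_neg]

theorem MonoidHom.ext_multiplicative_zmod {n : ℕ} {M : Type*} [Monoid M]
    {f g : Multiplicative (ZMod n) →* M}
    (h : f (Multiplicative.ofAdd 1) = g (Multiplicative.ofAdd 1)) : f = g :=
  (MonoidHom.cancel_right (f := (Int.castAddHom (ZMod n)).toMultiplicative)
    ZMod.intCast_surjective).1 (MonoidHom.ext_mint (by simpa using h))

section ZModPowHom

variable {G : Type*} [Group G] {n : ℕ}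

def zmodPowHom (g : G) (hg : g ^ (n : ℤ) = 1) : Multiplicative (ZMod n) →* G :=
  AddMonoidHom.toMultiplicativeLeft (ZMod.lift n ⟨zmultiplesHom _ (Additive.ofMul g), hg⟩)

@[simp]
theorem zmodPowHom_ofAdd_one (g : G) (hg : g ^ (n : ℤ) = 1) :
    zmodPowHom g hg (Multiplicative.ofAdd 1) = g := by
  simpa [zmodPowHom] using
    congrArg Additive.toMul (ZMod.lift_coe n ⟨zmultiplesHom _ (Additive.ofMul g), hg⟩ 1)

end ZModPowHom

section CyclicRelators

variable {ι : Type*} (m : ι → ℕ)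

def cyclicRelators : Set (FreeGroup ι) :=
  Set.range fun i => FreeGroup.of i ^ (m i : ℤ)

theorem PresentedGroup.of_zpow_cyclicRelators (i : ι) :
    (PresentedGroup.of i : PresentedGroup (cyclicRelators m)) ^ (m i : ℤ) = 1 := by
  rw [PresentedGroup.of, ← map_zpow]
  exact PresentedGroup.one_of_mem ⟨i, rfl⟩

theorem lift_cyclicRelators_eq_one :
    ∀ r ∈ cyclicRelators m,
      FreeGroup.lift
        (fun i => CoprodI.of (M := fun i => Multiplicative (ZMod (m i))) (i := i) (.ofAdd 1)) r
        = 1 := by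
  rintro _ ⟨i, rfl⟩
  dsimp only
  rw [map_zpow, FreeGroup.lift_apply_of, ← map_zpow, ← ofAdd_zsmul, zsmul_one, Int.cast_natCast,
    ZMod.natCast_self, ofAdd_zero, map_one]

noncomputable def cyclicPresentedGroupEquivCoprodI :
    PresentedGroup (cyclicRelators m) ≃* CoprodI fun i => Multiplicative (ZMod (m i)) :=
  MonoidHom.toMulEquiv (PresentedGroup.toGroup (lift_cyclicRelators_eq_one m))
    (CoprodI.lift fun i => zmodPowHom _ (PresentedGroup.of_zpow_cyclicRelators m i))
    (PresentedGroup.ext fun i => by simp)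
    (CoprodI.ext_hom _ _ fun i => MonoidHom.ext_multiplicative_zmod (by simp))

end CyclicRelators

theorem normalClosure_wRelators_empty [LinearOrder V] (K : SimpleGraph V) (w : Sym2 V → ℤ)
    (A : SimpleGraph V) :
    Subgroup.normalClosure (WRelators K ∅ w A) =
      Subgroup.normalClosure (cyclicRelators (graphFacMod K w A)) := by
  apply le_antisymm <;> refine Subgroup.normalClosure_le_normal ?_
  · rintro _ (⟨e, he, rfl⟩ | ⟨_, _, _, _, _, _, _, _, h, _⟩)
    · rw [SetLike.mem_coe, ← Subgroup.zpow_natAbs_mem_iff]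
      exact Subgroup.subset_normalClosure ⟨e, by simp [graphFacMod, he]⟩
    · exact absurd h (Set.notMem_empty _)
  · rintro _ ⟨e, rfl⟩
    by_cases he : A.Adj e.1.1 e.1.2
    · simp only [graphFacMod, he, if_true, SetLike.mem_coe, Subgroup.zpow_natAbs_mem_iff]
      exact Subgroup.subset_normalClosure (Or.inl ⟨e, he, rfl⟩)
    · simp [graphFacMod, he, one_mem]

theorem weighted_pi1_graph_general [LinearOrder V] (K : SimpleGraph V) (w : Sym2 V → ℤ)
    (A : SimpleGraph V) :
    Nonempty (wpi1 K (∅ : Set (Finset V)) w A ≃*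
      Monoid.CoprodI (fun e : WGen K => Multiplicative (ZMod (graphFacMod K w A e)))) :=
  ⟨(QuotientGroup.quotientMulEquivOfEq (normalClosure_wRelators_empty K w A)).trans
    (cyclicPresentedGroupEquivCoprodI _)⟩

/-- Proposition 3.2. The weighted fundamental group of a weighted graph
`(K, w, A)` (a WSC with no 2-simplices) is the free product, over the edges `ab` of `K`, of
`ℤ` if `ab ∉ A` and of `ℤ/w(ab)` if `ab ∈ A`. -/
theorem weighted_pi1_graph [LinearOrder V] (K : SimpleGraph V) (w : Sym2 V → ℤ)
    (A : SimpleGraph V) (hwsc : IsWSC K (∅ : Set (Finset V)) w A) :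
    Nonempty (wpi1 K (∅ : Set (Finset V)) w A ≃*
      Monoid.CoprodI (fun e : WGen K => Multiplicative (ZMod (graphFacMod K w A e)))) :=
  weighted_pi1_graph_general K w A
end

section
/- Let (K, w, A) be a weighted graph with V finite, and suppose there is an integer a with w(σ) = a for every edge σ of K. Then for any spanning tree B of K, π₁(K, w, A) is isomorphic to π₁(K, w, B). -/
open scoped Classical

variable {V : Type*}

/-! With a constant weight `a` and no 2-simplices, `π₁(K, w, A)` is presented by one generator
per edge of `K` and the relators `g ^ a` for the generators coming from edges of `A`. Two
spanning trees of a finite graph have the same number of edges, `|V| - 1`, so some permutation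
of the generators carries the edges of `A` onto those of `B`, and it carries one presentation
onto the other. -/

theorem Finite.exists_perm_image_eq_of_card_eq {α : Type*} [Finite α] {s t : Set α}
    (h : Nat.card s = Nat.card t) : ∃ σ : Equiv.Perm α, σ '' s = t := by
  have := Fintype.ofFinite α
  obtain ⟨e⟩ := Finite.card_eq.1 h
  obtain ⟨f⟩ : Nonempty ({x // x ∉ s} ≃ {x // x ∉ t}) := by
    rw [← Finite.card_eq]
    simp only [Nat.card_eq_fintype_card, Fintype.card_subtype_compl] at h ⊢
    rw [h]
  have hσ : ∀ x, Equiv.subtypeCongr e f x ∈ t ↔ x ∈ s := fun x => by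
    by_cases hx : x ∈ s
    · simp [Equiv.subtypeCongr, Equiv.sumCompl_symm_apply_of_pos hx, hx, (e ⟨x, hx⟩).2]
    · simp [Equiv.subtypeCongr, Equiv.sumCompl_symm_apply_of_neg hx, hx, (f ⟨x, hx⟩).2]
  refine ⟨Equiv.subtypeCongr e f, Set.ext fun y => ?_⟩
  rw [Equiv.image_eq_preimage_symm, Set.mem_preimage, ← hσ, Equiv.apply_symm_apply]

theorem PresentedGroup.nonempty_mulEquiv_of_image_eq {α β : Type*} {r : Set (FreeGroup α)}
    {s : Set (FreeGroup β)} (e : α ≃ β) (h : FreeGroup.freeGroupCongr e '' r = s) :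
    Nonempty (PresentedGroup r ≃* PresentedGroup s) := by
  subst h
  exact ⟨equivPresentedGroup r e⟩

section
variable [LinearOrder V] {K : SimpleGraph V}

instance [Finite V] : Finite (WGen K) := Subtype.finite

theorem WGen.mk_injective : Function.Injective fun e : WGen K => s(e.1.1, e.1.2) := by
  rintro ⟨⟨a, b⟩, hab, -⟩ ⟨⟨c, d⟩, hcd, -⟩ (h : s(a, b) = s(c, d))
  have hinf := congrArg Sym2.inf h
  have hsup := congrArg Sym2.sup h
  simp only [Sym2.inf_mk, Sym2.sup_mk, inf_of_le_left hab.le, inf_of_le_left hcd.le,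
    sup_of_le_right hab.le, sup_of_le_right hcd.le] at hinf hsup
  subst hinf hsup
  rfl

theorem WGen.card_adj_eq_card_edgeSet {G : SimpleGraph V} (hG : G ≤ K) :
    Nat.card {e : WGen K | G.Adj e.1.1 e.1.2} = Nat.card G.edgeSet := by
  refine Nat.card_congr (Equiv.ofBijective (fun e => ⟨s(e.1.1.1, e.1.1.2), e.2⟩) ⟨?_, ?_⟩)
  · intro e f h
    exact Subtype.ext (WGen.mk_injective (congrArg Subtype.val h))
  · rintro ⟨z, hz⟩
    induction z using Sym2.ind with
    | _ x y =>
      rcases lt_or_gt_of_ne (G.ne_of_adj hz) with hxy | hyx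
      · exact ⟨⟨⟨(x, y), hxy, hG hz⟩, hz⟩, rfl⟩
      · exact ⟨⟨⟨(y, x), hyx, hG hz.symm⟩, hz.symm⟩, Subtype.ext Sym2.eq_swap⟩

theorem wRelators_empty_eq_image_of_weight_eq {w : Sym2 V → ℤ} {a : ℤ}
    (hw : ∀ x y : V, K.Adj x y → w s(x, y) = a) (A : SimpleGraph V) :
    WRelators K ∅ w A = (fun e => FreeGroup.of e ^ a) '' {e | A.Adj e.1.1 e.1.2} := by
  ext r
  simp only [WRelators, Set.mem_union, Set.mem_ofPred_eq, Set.mem_empty_iff_false, false_and,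
    exists_false, or_false, Set.mem_image]
  refine exists_congr fun e => ?_
  rw [hw _ _ e.2.2, eq_comm]

end

/-- Corollary 3.3. Let `(K, w, A)` be a weighted graph on a finite vertex
type, with all weights equal to a constant `a ∈ ℤ`. Then for any spanning tree `B` of `K` we
have `π₁(K, w, A) ≅ π₁(K, w, B)`. -/
theorem weighted_pi1_graph_tree_indep [LinearOrder V] [Finite V] (K : SimpleGraph V)
    (w : Sym2 V → ℤ) (A B : SimpleGraph V)
    (hA : IsWSC K (∅ : Set (Finset V)) w A) (hB : IsWSC K (∅ : Set (Finset V)) w B)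
    (a : ℤ) (hw : ∀ x y : V, K.Adj x y → w s(x, y) = a) :
    Nonempty (wpi1 K (∅ : Set (Finset V)) w A ≃* wpi1 K (∅ : Set (Finset V)) w B) := by
  have hcard : Nat.card A.edgeSet = Nat.card B.edgeSet := by
    have hA' := (SimpleGraph.isTree_iff_connected_and_card.1 hA.tree).2
    have hB' := (SimpleGraph.isTree_iff_connected_and_card.1 hB.tree).2
    omega
  obtain ⟨σ, hσ⟩ := Finite.exists_perm_image_eq_of_card_eq
    (s := {e : WGen K | A.Adj e.1.1 e.1.2}) (t := {e | B.Adj e.1.1 e.1.2})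
    (by rw [WGen.card_adj_eq_card_edgeSet hA.le, WGen.card_adj_eq_card_edgeSet hB.le, hcard])
  refine PresentedGroup.nonempty_mulEquiv_of_image_eq σ ?_
  rw [wRelators_empty_eq_image_of_weight_eq hw, wRelators_empty_eq_image_of_weight_eq hw, ← hσ,
    Set.image_image, Set.image_image]
  simp
end

section
/- Let L be a connected simple graph and let K₀, K₁, K₂ be connected subgraphs of L (in the sense of SimpleGraph.Subgraph, each containing its own vertex set) such that K₁ ⊔ K₂ = L and K₁ ⊓ K₂ = K₀ (joins and meets taken vertex- and edge-wise). Let A₀, A₁, A₂, B be spanning trees of K₀, K₁, K₂, L respectively, with A₀ ≤ A₁, A₀ ≤ A₂, A₁ ≤ B and A₂ ≤ B. Then B = A₁ ⊔ A₂ and A₁ ⊓ A₂ = A₀. -/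
/-!
Every edge of an acyclic graph is a bridge, so a connected subgraph `C ≤ D` of an acyclic
subgraph `D` with the same vertices must already contain every edge of `D`: the path in `C`
between the ends of an edge of `D` has to use that edge.

Apply this twice. `A₁ ⊔ A₂` is connected (the two trees meet in the vertices of `K₀`), lies in
the tree `B` and covers all vertices of `K₁ ⊔ K₂ = ⊤`, hence equals `B`. Likewise the tree `A₀`
lies in the acyclic `A₁ ⊓ A₂`, whose vertices are those of `K₁ ⊓ K₂ = K₀`, hence equals it.
-/

/-- `A` is a spanning tree of the subgraph `H`: `A` is a subgraph of `H` containing every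
vertex of `H`, connected, and acyclic. -/
def SubgraphIsSpanningTreeOf {V : Type*} {L : SimpleGraph V} (A H : L.Subgraph) : Prop :=
  A ≤ H ∧ A.verts = H.verts ∧ A.Connected ∧ A.coe.IsAcyclic

namespace SimpleGraph.Subgraph

variable {V : Type*} {G : SimpleGraph V} {C D : G.Subgraph}

theorem isAcyclic_coe_of_le (hCD : C ≤ D) (hD : D.coe.IsAcyclic) : C.coe.IsAcyclic :=
  hD.comap (inclusion hCD) (inclusion.injective hCD)

theorem le_of_connected_of_isAcyclic (hCD : C ≤ D) (hC : C.Connected) (hD : D.coe.IsAcyclic)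
    (hverts : D.verts ⊆ C.verts) : D ≤ C := by
  refine ⟨hverts, fun {u v} hadj => ?_⟩
  let u' : C.verts := ⟨u, hverts (D.edge_vert hadj)⟩
  let v' : C.verts := ⟨v, hverts (D.edge_vert hadj.symm)⟩
  obtain ⟨p⟩ := hC u' v'
  have hDadj : D.coe.Adj (inclusion hCD u') (inclusion hCD v') := hadj
  have hbridge := isBridge_iff_forall_walk_mem_edges.mp
    (isAcyclic_iff_forall_adj_isBridge.mp hD hDadj) (p.map (inclusion hCD))
  rw [Walk.edges_map, ← Sym2.map_mk,
    List.mem_map_of_injective (Sym2.map.injective (inclusion.injective hCD))] at hbridge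
  exact p.adj_of_mem_edges hbridge

theorem eq_of_le_of_connected_of_isAcyclic (hCD : C ≤ D) (hC : C.Connected)
    (hD : D.coe.IsAcyclic) (hverts : D.verts ⊆ C.verts) : C = D :=
  le_antisymm hCD (le_of_connected_of_isAcyclic hCD hC hD hverts)

end SimpleGraph.Subgraph

theorem spanning_trees_union_inter_general {V : Type*} {L : SimpleGraph V}
    (K₀ K₁ K₂ : L.Subgraph)
    (hunion : K₁ ⊔ K₂ = (⊤ : L.Subgraph)) (hinter : K₁ ⊓ K₂ = K₀)
    (A₀ A₁ A₂ B : L.Subgraph)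
    (hA₀ : SubgraphIsSpanningTreeOf A₀ K₀) (hA₁ : SubgraphIsSpanningTreeOf A₁ K₁)
    (hA₂ : SubgraphIsSpanningTreeOf A₂ K₂) (hB : SubgraphIsSpanningTreeOf B ⊤)
    (h01 : A₀ ≤ A₁) (h02 : A₀ ≤ A₂) (h1B : A₁ ≤ B) (h2B : A₂ ≤ B) :
    B = A₁ ⊔ A₂ ∧ A₁ ⊓ A₂ = A₀ := by
  obtain ⟨-, hA₀v, hA₀c, -⟩ := hA₀
  obtain ⟨-, hA₁v, hA₁c, hA₁a⟩ := hA₁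
  obtain ⟨-, hA₂v, hA₂c, -⟩ := hA₂
  obtain ⟨-, hBv, -, hBa⟩ := hB
  have h012 : A₀ ≤ A₁ ⊓ A₂ := le_inf h01 h02
  have hsup_conn : (A₁ ⊔ A₂).Connected :=
    SimpleGraph.Subgraph.connected_sup hA₁c.preconnected hA₂c.preconnected
      (hA₀c.nonempty.mono h012.1)
  have hsup_verts : B.verts ⊆ (A₁ ⊔ A₂).verts := by
    rw [hBv, ← hunion, SimpleGraph.Subgraph.verts_sup, SimpleGraph.Subgraph.verts_sup, hA₁v,
      hA₂v]
  have hinf_verts : (A₁ ⊓ A₂).verts ⊆ A₀.verts := by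
    rw [hA₀v, ← hinter, SimpleGraph.Subgraph.verts_inf, SimpleGraph.Subgraph.verts_inf, hA₁v,
      hA₂v]
  have hinf_acyclic : (A₁ ⊓ A₂).coe.IsAcyclic :=
    SimpleGraph.Subgraph.isAcyclic_coe_of_le inf_le_left hA₁a
  exact ⟨(SimpleGraph.Subgraph.eq_of_le_of_connected_of_isAcyclic (sup_le h1B h2B) hsup_conn
      hBa hsup_verts).symm,
    (SimpleGraph.Subgraph.eq_of_le_of_connected_of_isAcyclic h012 hA₀c hinf_acyclic
      hinf_verts).symm⟩

/-- Lemma 4.5. Let `L` be a connected simple graph and `K₀, K₁, K₂`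
connected subgraphs with `K₁ ⊔ K₂ = L` and `K₁ ⊓ K₂ = K₀`. If `A₀, A₁, A₂, B` are spanning
trees of `K₀, K₁, K₂, L` respectively with `A₀ ≤ A₁`, `A₀ ≤ A₂`, `A₁ ≤ B`, `A₂ ≤ B`, then
`B = A₁ ⊔ A₂` and `A₁ ⊓ A₂ = A₀`. -/
theorem spanning_trees_union_inter {V : Type*} {L : SimpleGraph V} (hL : L.Connected)
    (K₀ K₁ K₂ : L.Subgraph) (hK₀ : K₀.Connected) (hK₁ : K₁.Connected) (hK₂ : K₂.Connected)
    (hunion : K₁ ⊔ K₂ = (⊤ : L.Subgraph)) (hinter : K₁ ⊓ K₂ = K₀)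
    (A₀ A₁ A₂ B : L.Subgraph)
    (hA₀ : SubgraphIsSpanningTreeOf A₀ K₀) (hA₁ : SubgraphIsSpanningTreeOf A₁ K₁)
    (hA₂ : SubgraphIsSpanningTreeOf A₂ K₂) (hB : SubgraphIsSpanningTreeOf B ⊤)
    (h01 : A₀ ≤ A₁) (h02 : A₀ ≤ A₂) (h1B : A₁ ≤ B) (h2B : A₂ ≤ B) :
    B = A₁ ⊔ A₂ ∧ A₁ ⊓ A₂ = A₀ :=
  spanning_trees_union_inter_general K₀ K₁ K₂ hunion hinter A₀ A₁ A₂ B hA₀ hA₁ hA₂ hB h01 h02 h1B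
    h2B
end

section
/- Let (L, T_L, w_L, B) be a WSC and let (K₀, T₀, w₀, A₀), (K₁, T₁, w₁, A₁), (K₂, T₂, w₂, A₂) be weighted subcomplexes of (L, T_L, w_L, B) such that: the edge sets satisfy E(K₁) ∪ E(K₂) = E(L) and E(K₁) ∩ E(K₂) = E(K₀), the 2-simplex sets satisfy T₁ ∪ T₂ = T_L and T₁ ∩ T₂ = T₀, and (K₀, T₀, w₀, A₀) is a weighted subcomplex of both (K₁, T₁, w₁, A₁) and (K₂, T₂, w₂, A₂). Let i₁₊ : π₁(K₀, w₀, A₀) → π₁(K₁, w₁, A₁) and i₂₊ : π₁(K₀, w₀, A₀) → π₁(K₂, w₂, A₂) be the induced homomorphisms sending each generator g_{ab} to the generator g_{ab}. Then π₁(L, w_L, B) is isomorphic to the quotient of the free product π₁(K₁, w₁, A₁) ∗ π₁(K₂, w₂, A₂) (Monoid.Coprod) by the normal closure of the set { inl(i₁₊(α)) · inr(i₂₊(α))⁻¹ : α ∈ π₁(K₀, w₀, A₀) }, i.e. to the free product with amalgamation of π₁(K₁, w₁, A₁) and π₁(K₂, w₂, A₂) over π₁(K₀, w₀, A₀). -/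
/-! Every spanning tree here is contained in the tree `B`, and a tree contained in an acyclic
graph is all of it, so `A₁ = A₂ = B`. Consequently each relator of `π₁(L)` is the image of a
relator of `π₁(K₁)` (tree edges, triangles of `T₁`) or of `π₁(K₂)` (triangles of `T₂`), every
relator of `π₁(Kᵢ)` is one of `π₁(L)`, and the generators of `π₁(L)` are those of `π₁(K₁)` and
`π₁(K₂)`, overlapping exactly in those of `π₁(K₀)`. For presentations glued like this the
presented group is the amalgamated product: generators are sent to whichever side they live on,
which is consistent because the two images of a shared generator are identified. -/

open scoped Classical

variable {V : Type*}

/-- `(K, TK, wK, A)` is a weighted subcomplex of `(L, TL, wL, B)`. -/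
structure IsWSubcomplex (K : SimpleGraph V) (TK : Set (Finset V)) (wK : Sym2 V → ℤ)
    (A : SimpleGraph V) (L : SimpleGraph V) (TL : Set (Finset V)) (wL : Sym2 V → ℤ)
    (B : SimpleGraph V) : Prop where
  graph_le : K ≤ L
  tri_subset : TK ⊆ TL
  weight_agree : ∀ a b : V, K.Adj a b → wK s(a, b) = wL s(a, b)
  tree_le : A ≤ B

open Function

theorem Function.extend_extend_apply_right {α α₁ α₂ γ : Type*} {ι₁ : α₁ → α} {ι₂ : α₂ → α}
    {f₁ : α₁ → γ} {f₂ : α₂ → γ} (hι₂ : Injective ι₂)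
    (hagree : ∀ y₁ y₂, ι₁ y₁ = ι₂ y₂ → f₁ y₁ = f₂ y₂) (e' : α → γ) (y : α₂) :
    extend ι₁ f₁ (extend ι₂ f₂ e') (ι₂ y) = f₂ y := by
  rw [extend_def]
  split_ifs with h
  · exact hagree _ _ h.choose_spec
  · exact hι₂.extend_apply _ _ _

section AmalgamatedProduct

variable {G₀ G₁ G₂ H : Type*} [Group G₀] [Group G₁] [Group G₂] [Group H]

abbrev AmalgamatedProduct (i₁ : G₀ →* G₁) (i₂ : G₀ →* G₂) : Type _ :=
  Monoid.Coprod G₁ G₂ ⧸ Subgroup.normalClosure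
    {x | ∃ α : G₀, x = Monoid.Coprod.inl (i₁ α) * (Monoid.Coprod.inr (i₂ α))⁻¹}

namespace AmalgamatedProduct

variable {i₁ : G₀ →* G₁} {i₂ : G₀ →* G₂}

def inl : G₁ →* AmalgamatedProduct i₁ i₂ := (QuotientGroup.mk' _).comp Monoid.Coprod.inl

def inr : G₂ →* AmalgamatedProduct i₁ i₂ := (QuotientGroup.mk' _).comp Monoid.Coprod.inr

theorem inl_comp_eq_inr_comp : inl.comp i₁ = (inr : G₂ →* AmalgamatedProduct i₁ i₂).comp i₂ := by
  ext a
  exact QuotientGroup.eq_iff_div_mem.2 (Subgroup.subset_normalClosure ⟨a, div_eq_mul_inv _ _⟩)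

def lift (φ₁ : G₁ →* H) (φ₂ : G₂ →* H) (h : φ₁.comp i₁ = φ₂.comp i₂) :
    AmalgamatedProduct i₁ i₂ →* H :=
  QuotientGroup.lift _ (Monoid.Coprod.lift φ₁ φ₂) <| Subgroup.normalClosure_le_normal <| by
    rintro _ ⟨a, rfl⟩
    simpa [mul_inv_eq_one] using DFunLike.congr_fun h a

@[simp]
theorem lift_inl (φ₁ : G₁ →* H) (φ₂ : G₂ →* H) (h : φ₁.comp i₁ = φ₂.comp i₂) (x : G₁) :
    lift φ₁ φ₂ h (inl x) = φ₁ x :=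
  Monoid.Coprod.lift_apply_inl φ₁ φ₂ x

@[simp]
theorem lift_inr (φ₁ : G₁ →* H) (φ₂ : G₂ →* H) (h : φ₁.comp i₁ = φ₂.comp i₂) (x : G₂) :
    lift φ₁ φ₂ h (inr x) = φ₂ x :=
  Monoid.Coprod.lift_apply_inr φ₁ φ₂ x

theorem hom_ext {f g : AmalgamatedProduct i₁ i₂ →* H} (h₁ : f.comp inl = g.comp inl)
    (h₂ : f.comp inr = g.comp inr) : f = g :=
  QuotientGroup.monoidHom_ext _ (Monoid.Coprod.hom_ext h₁ h₂)

end AmalgamatedProduct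

end AmalgamatedProduct

namespace PresentedGroup

variable {α α₀ α₁ α₂ G : Type*} [Group G] {R : Set (FreeGroup α)} {R₀ : Set (FreeGroup α₀)}
  {R₁ : Set (FreeGroup α₁)} {R₂ : Set (FreeGroup α₂)} {ι₁ : α₁ → α} {ι₂ : α₂ → α}

@[simp]
theorem map_freeGroupMap_of (hR₁ : Set.MapsTo (FreeGroup.map ι₁) R₁ R) (y : α₁) :
    PresentedGroup.map (FreeGroup.map ι₁) hR₁ (of y) = of (ι₁ y) :=
  rfl

theorem lift_map_eq_one (φ : PresentedGroup R₁ →* G) {f : α → G}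
    (hf : ∀ y, f (ι₁ y) = φ (of y)) {r : FreeGroup α₁} (hr : r ∈ R₁) :
    FreeGroup.lift f (FreeGroup.map ι₁ r) = 1 := by
  have : (FreeGroup.lift f).comp (FreeGroup.map ι₁) = φ.comp (mk R₁) :=
    FreeGroup.ext_hom _ _ fun y => by simp [hf, of]
  rw [← MonoidHom.comp_apply, this, MonoidHom.comp_apply, one_of_mem hr, map_one]

variable {φ₁ : PresentedGroup R₁ →* G} {φ₂ : PresentedGroup R₂ →* G}

section Glue

variable (hι₁ : Injective ι₁) (hι₂ : Injective ι₂)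
    (hagree : ∀ y₁ y₂, ι₁ y₁ = ι₂ y₂ → φ₁ (of y₁) = φ₂ (of y₂))
    (hR : R ⊆ FreeGroup.map ι₁ '' R₁ ∪ FreeGroup.map ι₂ '' R₂)

noncomputable def glue : PresentedGroup R →* G :=
  toGroup (f := extend ι₁ (φ₁ ∘ of) (extend ι₂ (φ₂ ∘ of) 1)) fun r hr => by
    rcases hR hr with ⟨r₁, hr₁, rfl⟩ | ⟨r₂, hr₂, rfl⟩
    · exact lift_map_eq_one φ₁ (hι₁.extend_apply _ _) hr₁
    · exact lift_map_eq_one φ₂ (extend_extend_apply_right hι₂ hagree _) hr₂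

@[simp]
theorem glue_of_left (y : α₁) : glue hι₁ hι₂ hagree hR (of (ι₁ y)) = φ₁ (of y) :=
  (toGroup.of _).trans (hι₁.extend_apply _ _ _)

@[simp]
theorem glue_of_right (y : α₂) : glue hι₁ hι₂ hagree hR (of (ι₂ y)) = φ₂ (of y) :=
  (toGroup.of _).trans (extend_extend_apply_right hι₂ hagree _ _)

end Glue

theorem nonempty_mulEquiv_amalgamatedProduct {j₁ : α₀ → α₁} {j₂ : α₀ → α₂}
    (hι₁ : Injective ι₁) (hι₂ : Injective ι₂)
    (hcover : ∀ x, x ∈ Set.range ι₁ ∨ x ∈ Set.range ι₂)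
    (hinter : ∀ y₁ y₂, ι₁ y₁ = ι₂ y₂ → ∃ z, j₁ z = y₁ ∧ j₂ z = y₂)
    (hcomm : ∀ z, ι₁ (j₁ z) = ι₂ (j₂ z))
    (hR₁ : Set.MapsTo (FreeGroup.map ι₁) R₁ R) (hR₂ : Set.MapsTo (FreeGroup.map ι₂) R₂ R)
    (hR : R ⊆ FreeGroup.map ι₁ '' R₁ ∪ FreeGroup.map ι₂ '' R₂)
    {i₁ : PresentedGroup R₀ →* PresentedGroup R₁} {i₂ : PresentedGroup R₀ →* PresentedGroup R₂}
    (hi₁ : ∀ z, i₁ (of z) = of (j₁ z)) (hi₂ : ∀ z, i₂ (of z) = of (j₂ z)) :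
    Nonempty (PresentedGroup R ≃* AmalgamatedProduct i₁ i₂) := by
  have hagree : ∀ y₁ y₂, ι₁ y₁ = ι₂ y₂ →
      AmalgamatedProduct.inl (i₁ := i₁) (i₂ := i₂) (of y₁) = AmalgamatedProduct.inr (of y₂) := by
    intro y₁ y₂ h
    obtain ⟨z, rfl, rfl⟩ := hinter y₁ y₂ h
    rw [← hi₁, ← hi₂]
    exact DFunLike.congr_fun AmalgamatedProduct.inl_comp_eq_inr_comp (of z)
  have hψ : (PresentedGroup.map (FreeGroup.map ι₁) hR₁).comp i₁ =
      (PresentedGroup.map (FreeGroup.map ι₂) hR₂).comp i₂ :=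
    ext fun z => by simp [hi₁, hi₂, hcomm]
  let ψ := AmalgamatedProduct.lift _ _ hψ
  refine ⟨MonoidHom.toMulEquiv (glue hι₁ hι₂ hagree hR) ψ ?_ ?_⟩
  · ext x
    rcases hcover x with ⟨y, rfl⟩ | ⟨y, rfl⟩ <;> simp [ψ]
  · apply AmalgamatedProduct.hom_ext <;> ext y <;> simp [ψ]

end PresentedGroup

namespace WGen

variable [LinearOrder V] {K L : SimpleGraph V}

def ofLE (h : K ≤ L) (e : WGen K) : WGen L := ⟨e.1, e.2.1, h e.2.2⟩

theorem ofLE_injective (h : K ≤ L) : Injective (ofLE h) :=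
  fun _ _ he => Subtype.ext (congrArg (fun e : WGen L => e.1) he :)

end WGen

theorem IsWSC.isClique_of_mem {K A : SimpleGraph V} {T : Set (Finset V)} {w : Sym2 V → ℤ}
    (h : IsWSC K T w A) {t : Finset V} (ht : t ∈ T) :
    K.IsClique (t : Set V) := by
  obtain ⟨a, v, b, -, -, -, rfl, hav, hvb, hab⟩ := h.tri t ht
  exact (SimpleGraph.is3Clique_triple_iff.2 ⟨hav, hab, hvb⟩).isClique

section Relators

variable [LinearOrder V] {K L A B : SimpleGraph V} {T TK TL : Set (Finset V)}
  {w wK wL : Sym2 V → ℤ}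

theorem WRelators_union (T' : Set (Finset V)) :
    WRelators K (T ∪ T') w A = WRelators K T w A ∪ WRelators K T' w A := by
  ext r
  simp only [WRelators, Set.mem_union, Set.mem_ofPred_eq, or_and_right, exists_or]
  exact or_or_distrib_left

theorem IsWSubcomplex.mapsTo_relators (h : IsWSubcomplex K TK wK A L TL wL B) :
    Set.MapsTo (FreeGroup.map (WGen.ofLE h.graph_le)) (WRelators K TK wK A)
      (WRelators L TL wL B) := by
  rintro r (⟨e, he, rfl⟩ | ⟨a, v, b, hav, hvb, h1, h2, h3, hT, rfl⟩)
  · refine Or.inl ⟨WGen.ofLE h.graph_le e, h.tree_le he, ?_⟩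
    rw [map_zpow, FreeGroup.map.of, h.weight_agree _ _ e.2.2]
    rfl
  · refine Or.inr ⟨a, v, b, hav, hvb, h.graph_le h1, h.graph_le h2, h.graph_le h3,
      h.tri_subset hT, ?_⟩
    -- `WRelators` elaborates its triangle relators in `FreeGroup {p // …}`, not in
    -- `FreeGroup (WGen K)`; unfolding `WGen` makes the instances match for `simp`.
    unfold WGen at *
    simp only [map_mul, map_inv, map_zpow, h.weight_agree _ _ h1, h.weight_agree _ _ h2,
      h.weight_agree _ _ h3]
    rfl

theorem IsWSubcomplex.relators_subset_image (h : IsWSubcomplex K TK wK A L TL wL B)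
    (hK : IsWSC K TK wK A) (hB : B ≤ A) :
    WRelators L TK wL B ⊆ FreeGroup.map (WGen.ofLE h.graph_le) '' WRelators K TK wK A := by
  rintro r (⟨e, he, rfl⟩ | ⟨a, v, b, hav, hvb, h1, h2, h3, hT, rfl⟩)
  · have hKe : K.Adj e.1.1 e.1.2 := hK.le (hB he)
    refine ⟨_, Or.inl ⟨⟨e.1, e.2.1, hKe⟩, hB he, rfl⟩, ?_⟩
    rw [map_zpow, h.weight_agree _ _ hKe]
    rfl
  · have hcl := hK.isClique_of_mem hT
    have h1' : K.Adj a v := hcl (by simp) (by simp) hav.ne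
    have h2' : K.Adj v b := hcl (by simp) (by simp) hvb.ne
    have h3' : K.Adj a b := hcl (by simp) (by simp) (hav.trans hvb).ne
    refine ⟨_, Or.inr ⟨a, v, b, hav, hvb, h1', h2', h3', hT, rfl⟩, ?_⟩
    unfold WGen at *
    simp only [map_mul, map_inv, map_zpow, h.weight_agree _ _ h1', h.weight_agree _ _ h2',
      h.weight_agree _ _ h3']
    rfl

end Relators

theorem weighted_van_kampen_general [LinearOrder V]
    (L : SimpleGraph V) (TL : Set (Finset V)) (wL : Sym2 V → ℤ) (B : SimpleGraph V)
    (K₀ K₁ K₂ : SimpleGraph V) (T₀ T₁ T₂ : Set (Finset V)) (w₀ w₁ w₂ : Sym2 V → ℤ)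
    (A₀ A₁ A₂ : SimpleGraph V)
    (hL : IsWSC L TL wL B) (h₁ : IsWSC K₁ T₁ w₁ A₁)
    (h₂ : IsWSC K₂ T₂ w₂ A₂)
    (hsub₁ : IsWSubcomplex K₁ T₁ w₁ A₁ L TL wL B)
    (hsub₂ : IsWSubcomplex K₂ T₂ w₂ A₂ L TL wL B)
    (hsub₀₁ : IsWSubcomplex K₀ T₀ w₀ A₀ K₁ T₁ w₁ A₁)
    (hsub₀₂ : IsWSubcomplex K₀ T₀ w₀ A₀ K₂ T₂ w₂ A₂)
    (hEunion : K₁ ⊔ K₂ = L) (hEinter : K₁ ⊓ K₂ = K₀)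
    (hTunion : T₁ ∪ T₂ = TL)
    (i₁ : wpi1 K₀ T₀ w₀ A₀ →* wpi1 K₁ T₁ w₁ A₁)
    (i₂ : wpi1 K₀ T₀ w₀ A₀ →* wpi1 K₂ T₂ w₂ A₂)
    (hi₁ : ∀ e : WGen K₀, i₁ (PresentedGroup.of e) =
      PresentedGroup.of (⟨e.1, e.2.1, hsub₀₁.graph_le e.2.2⟩ : WGen K₁))
    (hi₂ : ∀ e : WGen K₀, i₂ (PresentedGroup.of e) =
      PresentedGroup.of (⟨e.1, e.2.1, hsub₀₂.graph_le e.2.2⟩ : WGen K₂)) :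
    Nonempty (wpi1 L TL wL B ≃*
      (Monoid.Coprod (wpi1 K₁ T₁ w₁ A₁) (wpi1 K₂ T₂ w₂ A₂)) ⧸
        Subgroup.normalClosure
          {x | ∃ α : wpi1 K₀ T₀ w₀ A₀,
            x = Monoid.Coprod.inl (i₁ α) * (Monoid.Coprod.inr (i₂ α))⁻¹}) := by
  subst hEunion hEinter hTunion
  have hB₁ : B ≤ A₁ :=
    (SimpleGraph.isTree_iff_maximal_isAcyclic.mp h₁.tree).2.2 hL.tree.isAcyclic hsub₁.tree_le
  have hB₂ : B ≤ A₂ :=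
    (SimpleGraph.isTree_iff_maximal_isAcyclic.mp h₂.tree).2.2 hL.tree.isAcyclic hsub₂.tree_le
  refine PresentedGroup.nonempty_mulEquiv_amalgamatedProduct
    (WGen.ofLE_injective hsub₁.graph_le) (WGen.ofLE_injective hsub₂.graph_le) ?_ ?_
    (fun _ => rfl) hsub₁.mapsTo_relators hsub₂.mapsTo_relators ?_ hi₁ hi₂
  · intro e
    rcases e.2.2 with h | h
    exacts [Or.inl ⟨⟨e.1, e.2.1, h⟩, rfl⟩, Or.inr ⟨⟨e.1, e.2.1, h⟩, rfl⟩]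
  · intro e₁ e₂ he
    have hval : e₁.1 = e₂.1 := congrArg (fun e : WGen (K₁ ⊔ K₂) => e.1) he
    refine ⟨⟨e₁.1, e₁.2.1, e₁.2.2, hval ▸ e₂.2.2⟩, rfl, Subtype.ext hval⟩
  · rw [WRelators_union]
    exact Set.union_subset_union (hsub₁.relators_subset_image h₁ hB₁)
      (hsub₂.relators_subset_image h₂ hB₂)

/-- Weighted van Kampen Theorem, Theorem 4.9. `π₁(L, w_L, B)` is the free
product of `π₁(K₁, w₁, A₁)` and `π₁(K₂, w₂, A₂)` amalgamated over `π₁(K₀, w₀, A₀)`, i.e. the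
quotient of `Monoid.Coprod` by the normal closure of `{inl(i₁ α) · inr(i₂ α)⁻¹}`. -/
theorem weighted_van_kampen [LinearOrder V]
    (L : SimpleGraph V) (TL : Set (Finset V)) (wL : Sym2 V → ℤ) (B : SimpleGraph V)
    (K₀ K₁ K₂ : SimpleGraph V) (T₀ T₁ T₂ : Set (Finset V)) (w₀ w₁ w₂ : Sym2 V → ℤ)
    (A₀ A₁ A₂ : SimpleGraph V)
    (hL : IsWSC L TL wL B) (h₀ : IsWSC K₀ T₀ w₀ A₀) (h₁ : IsWSC K₁ T₁ w₁ A₁)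
    (h₂ : IsWSC K₂ T₂ w₂ A₂)
    (hsub₁ : IsWSubcomplex K₁ T₁ w₁ A₁ L TL wL B)
    (hsub₂ : IsWSubcomplex K₂ T₂ w₂ A₂ L TL wL B)
    (hsub₀₁ : IsWSubcomplex K₀ T₀ w₀ A₀ K₁ T₁ w₁ A₁)
    (hsub₀₂ : IsWSubcomplex K₀ T₀ w₀ A₀ K₂ T₂ w₂ A₂)
    (hEunion : K₁ ⊔ K₂ = L) (hEinter : K₁ ⊓ K₂ = K₀)
    (hTunion : T₁ ∪ T₂ = TL) (hTinter : T₁ ∩ T₂ = T₀)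
    (i₁ : wpi1 K₀ T₀ w₀ A₀ →* wpi1 K₁ T₁ w₁ A₁)
    (i₂ : wpi1 K₀ T₀ w₀ A₀ →* wpi1 K₂ T₂ w₂ A₂)
    (hi₁ : ∀ e : WGen K₀, i₁ (PresentedGroup.of e) =
      PresentedGroup.of (⟨e.1, e.2.1, hsub₀₁.graph_le e.2.2⟩ : WGen K₁))
    (hi₂ : ∀ e : WGen K₀, i₂ (PresentedGroup.of e) =
      PresentedGroup.of (⟨e.1, e.2.1, hsub₀₂.graph_le e.2.2⟩ : WGen K₂)) :
    Nonempty (wpi1 L TL wL B ≃*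
      (Monoid.Coprod (wpi1 K₁ T₁ w₁ A₁) (wpi1 K₂ T₂ w₂ A₂)) ⧸
        Subgroup.normalClosure
          {x | ∃ α : wpi1 K₀ T₀ w₀ A₀,
            x = Monoid.Coprod.inl (i₁ α) * (Monoid.Coprod.inr (i₂ α))⁻¹}) :=
  weighted_van_kampen_general L TL wL B K₀ K₁ K₂ T₀ T₁ T₂ w₀ w₁ w₂ A₀ A₁ A₂ hL h₁ h₂ hsub₁ hsub₂
    hsub₀₁ hsub₀₂ hEunion hEinter hTunion i₁ i₂ hi₁ hi₂
end

section
/- Let (K, w, A) be a weighted graph. Then the abelianization Ab(π₁(K, w, A)) is isomorphic to the direct sum of the free abelian group on the set of edges of K not lying in A (which is the first simplicial homology group H₁(K; ℤ) of the graph K) with the direct sum ⨁_{ab ∈ A} ℤ/w(ab) over the edges ab of A. -/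
open scoped Classical

variable {V : Type*}

open scoped DirectSum

/-! With no 2-simplices the only relators are `g_e ^ w(e)` for the tree edges `e`, each a power of
a single generator. Abelianizing a group presented by such relators gives the free abelian group on
the unconstrained generators times the cyclic groups `ℤ/w(e)`: mutually inverse maps are determined
by where they send generators, and the relators match the orders of the cyclic summands. -/

section PowerRelators

variable {α : Type*} (P : α → Prop) (n : α → ℤ)

def powerRelators : Set (FreeGroup α) :=
  {r | ∃ a, P a ∧ r = FreeGroup.of a ^ n a}

abbrev PowerRelatorsAb : Type _ :=
  FreeAbelianGroup {a // ¬ P a} × ⨁ a : {a // P a}, ZMod (n a).natAbs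

noncomputable def PowerRelatorsAb.gen (a : α) : PowerRelatorsAb P n :=
  if h : P a then (0, DirectSum.of (fun a : {a // P a} => ZMod (n a).natAbs) ⟨a, h⟩ 1)
  else (FreeAbelianGroup.of ⟨a, h⟩, 0)

def abGen (a : α) : Additive (Abelianization (PresentedGroup (powerRelators P n))) :=
  Additive.ofMul (Abelianization.of (PresentedGroup.of a))

variable {P n}

namespace PowerRelatorsAb

lemma zsmul_gen {a : α} (h : P a) : n a • gen P n a = 0 := by
  have hn : ((n a : ℤ) : ZMod (n a).natAbs) = 0 :=
    (ZMod.intCast_zmod_eq_zero_iff_dvd _ _).2 (Int.natAbs_dvd.2 dvd_rfl)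
  rw [gen, dif_pos h, Prod.smul_mk, smul_zero, ← map_zsmul, zsmul_one, hn, map_zero,
    Prod.mk_zero_zero]

lemma hom_ext {M : Type*} [AddCommGroup M] {f g : PowerRelatorsAb P n →+ M}
    (h : ∀ a, f (gen P n a) = g (gen P n a)) : f = g := by
  rw [← AddMonoidHom.coprod_unique f, ← AddMonoidHom.coprod_unique g]
  congr 1
  · refine FreeAbelianGroup.lift_ext _ _ fun a => ?_
    simpa [gen, a.2] using h a
  · refine DirectSum.addHom_ext fun a x => ?_
    obtain ⟨k, rfl⟩ := ZMod.intCast_surjective x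
    have ha := h a
    simp only [gen, dif_pos a.2] at ha
    rw [AddMonoidHom.comp_apply, AddMonoidHom.comp_apply, AddMonoidHom.inr_apply, ← zsmul_one,
      map_zsmul, ← Prod.smul_zero_mk, map_zsmul, map_zsmul, ha]

end PowerRelatorsAb

lemma zsmul_abGen {a : α} (h : P a) : n a • abGen P n a = 0 := by
  have hpow : (PresentedGroup.of a : PresentedGroup (powerRelators P n)) ^ n a = 1 := by
    rw [PresentedGroup.of, ← map_zpow]
    exact PresentedGroup.one_of_mem ⟨a, h, rfl⟩
  rw [abGen, ← ofMul_zpow, ← map_zpow, hpow, map_one, ofMul_one]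

lemma abGen_hom_ext {M : Type*} [AddCommGroup M]
    {f g : Additive (Abelianization (PresentedGroup (powerRelators P n))) →+ M}
    (h : ∀ a, f (abGen P n a) = g (abGen P n a)) : f = g :=
  MonoidHom.toAdditiveLeft.symm.injective <| Abelianization.hom_ext _ _ (PresentedGroup.ext h)

variable (P n)

noncomputable def toPowerRelatorsAb :
    Additive (Abelianization (PresentedGroup (powerRelators P n))) →+ PowerRelatorsAb P n :=
  MonoidHom.toAdditiveLeft <| Abelianization.lift <|
    PresentedGroup.toGroup (f := fun a => Multiplicative.ofAdd (PowerRelatorsAb.gen P n a)) <| by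
      rintro _ ⟨a, h, rfl⟩
      rw [map_zpow, FreeGroup.lift_apply_of, ← ofAdd_zsmul, PowerRelatorsAb.zsmul_gen h,
        ofAdd_zero]

noncomputable def ofPowerRelatorsAb :
    PowerRelatorsAb P n →+ Additive (Abelianization (PresentedGroup (powerRelators P n))) :=
  (FreeAbelianGroup.lift fun a => abGen P n a.1).coprod <|
    DirectSum.toAddMonoid fun a => ZMod.lift _
      ⟨zmultiplesHom _ (abGen P n a.1), by simp [zsmul_abGen a.2]⟩

@[simp]
lemma toPowerRelatorsAb_abGen (a : α) :
    toPowerRelatorsAb P n (abGen P n a) = PowerRelatorsAb.gen P n a := by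
  simp [toPowerRelatorsAb, abGen]

@[simp]
lemma ofPowerRelatorsAb_gen (a : α) :
    ofPowerRelatorsAb P n (PowerRelatorsAb.gen P n a) = abGen P n a := by
  by_cases h : P a
  · simp only [ofPowerRelatorsAb, PowerRelatorsAb.gen, dif_pos h, AddMonoidHom.coprod_apply,
      map_zero, zero_add, DirectSum.toAddMonoid_of]
    rw [← Int.cast_one, ZMod.lift_coe, zmultiplesHom_apply, one_zsmul]
  · simp [ofPowerRelatorsAb, PowerRelatorsAb.gen, h]

noncomputable def abelianizationPowerRelatorsEquiv :
    Additive (Abelianization (PresentedGroup (powerRelators P n))) ≃+ PowerRelatorsAb P n :=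
  AddMonoidHom.toAddEquiv (toPowerRelatorsAb P n) (ofPowerRelatorsAb P n)
    (abGen_hom_ext fun a => by simp)
    (PowerRelatorsAb.hom_ext fun a => by simp)

end PowerRelators

lemma wRelators_empty [LinearOrder V] (K : SimpleGraph V) (w : Sym2 V → ℤ) (A : SimpleGraph V) :
    WRelators K ∅ w A =
      powerRelators (fun e : WGen K => A.Adj e.1.1 e.1.2) (fun e => w s(e.1.1, e.1.2)) := by
  ext r
  simp [WRelators, powerRelators]

theorem abelianization_weighted_pi1_graph_general [LinearOrder V] (K : SimpleGraph V)
    (w : Sym2 V → ℤ) (A : SimpleGraph V) :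
    Nonempty (Additive (Abelianization (wpi1 K (∅ : Set (Finset V)) w A)) ≃+
      FreeAbelianGroup {e : WGen K // ¬ A.Adj e.1.1 e.1.2} ×
        ⨁ e : {e : WGen K // A.Adj e.1.1 e.1.2}, ZMod (w s(e.1.1.1, e.1.1.2)).natAbs) := by
  show Nonempty (Additive (Abelianization (PresentedGroup (WRelators K ∅ w A))) ≃+ _)
  rw [wRelators_empty]
  exact ⟨abelianizationPowerRelatorsEquiv _ _⟩

/-- Proposition 5.6. For a weighted graph `(K, w, A)`, the abelianization
of `π₁(K, w, A)` is the direct sum of the free abelian group on the edges of `K` not lying in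
`A` (which is the first simplicial homology group `H₁(K; ℤ)` of the graph `K`) with the direct
sum `⨁_{ab ∈ A} ℤ/w(ab)` over the edges `ab` of `A`. -/
theorem abelianization_weighted_pi1_graph [LinearOrder V] (K : SimpleGraph V)
    (w : Sym2 V → ℤ) (A : SimpleGraph V) (hwsc : IsWSC K (∅ : Set (Finset V)) w A) :
    Nonempty (Additive (Abelianization (wpi1 K (∅ : Set (Finset V)) w A)) ≃+
      FreeAbelianGroup {e : WGen K // ¬ A.Adj e.1.1 e.1.2} ×
        ⨁ e : {e : WGen K // A.Adj e.1.1 e.1.2}, ZMod (w s(e.1.1.1, e.1.1.2)).natAbs) :=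
  abelianization_weighted_pi1_graph_general K w A
end

section
/- Let (K, w, A) be a weighted graph with V finite. Let R = (number of edges of K not lying in A) + (number of edges ab of A with w(ab) = 0), and let F = ⨁_{ab ∈ A, w(ab) ≠ 0} ℤ/w(ab), a finite abelian group. Then Ab(π₁(K, w, A)) is isomorphic to ℤ^R × F; in particular, the torsion-free rank of Ab(π₁(K, w, A)) equals (#edges of K − #vertices of K + 1) + #{ab ∈ A : w(ab) = 0}. -/
open scoped Classical

variable {V : Type*}

open scoped DirectSum

section Aux


/-- `Equiv.piEquivPiSubtypeProd` as an `AddEquiv`. -/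
private def piSubtypeProdAddEquiv {ι : Type*} (p : ι → Prop) [DecidablePred p] (M : ι → Type*)
    [∀ i, AddCommMonoid (M i)] :
    (∀ i, M i) ≃+ (∀ i : {x // p x}, M i) × (∀ i : {x // ¬ p x}, M i) :=
  { Equiv.piEquivPiSubtypeProd p M with map_add' := fun _ _ => rfl }

/-- `Equiv.piCongrLeft'` as an `AddEquiv`. -/
private def piCongrLeftAddEquiv {ι ι' : Type*} (M : Type*) [AddCommMonoid M] (e : ι ≃ ι') :
    (ι → M) ≃+ (ι' → M) :=
  { Equiv.piCongrLeft' (fun _ => M) e with map_add' := fun _ _ => rfl }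

private def zmodCongr {m k : ℕ} (h : m = k) : ZMod m ≃+ ZMod k := by
  subst h; exact AddEquiv.refl _

private def zmodZeroAddEquivInt : ZMod 0 ≃+ ℤ := AddEquiv.refl ℤ

/-- Abelianization of a presented group whose relators are powers of generators. -/
theorem aux_abelianization {S : Type*} (n : S → ℤ) (rels : Set (FreeGroup S))
    (hrels : ∀ r ∈ rels, ∃ e : S, r = FreeGroup.of e ^ n e)
    (hmem : ∀ e : S, n e = 0 ∨ FreeGroup.of e ^ n e ∈ rels) :
    Nonempty (Additive (Abelianization (PresentedGroup rels)) ≃+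
      DirectSum S (fun e => ZMod (n e).natAbs)) := by
  set M := DirectSum S (fun e => ZMod (n e).natAbs) with hM
  -- the map to M
  set f : S → Multiplicative M :=
    fun e => Multiplicative.ofAdd (DirectSum.of (fun e => ZMod (n e).natAbs) e 1) with hfdef
  have hf : ∀ r ∈ rels, FreeGroup.lift f r = 1 := by
    intro r hr
    obtain ⟨e, rfl⟩ := hrels r hr
    rw [map_zpow, FreeGroup.lift_apply_of, hfdef]
    have h0 : (n e) • (1 : ZMod (n e).natAbs) = 0 := by
      rw [zsmul_one, ZMod.intCast_zmod_eq_zero_iff_dvd]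
      exact Int.natAbs_dvd.mpr dvd_rfl
    rw [← ofAdd_zsmul, ← map_zsmul, h0, map_zero]
    rfl
  set φ0 : PresentedGroup rels →* Multiplicative M := PresentedGroup.toGroup hf with hφ0
  set Φ : Abelianization (PresentedGroup rels) →* Multiplicative M :=
    Abelianization.lift φ0 with hΦ
  -- relations hold in the presented group
  have key : ∀ e : S, (PresentedGroup.of (rels := rels) e) ^ (n e) = 1 := by
    intro e
    rcases hmem e with h | h
    · simp [h]
    · show (PresentedGroup.mk rels (FreeGroup.of e)) ^ (n e) = 1
      rw [← map_zpow]
      exact (QuotientGroup.eq_one_iff _).mpr (Subgroup.subset_normalClosure h)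
  set g : S → Additive (Abelianization (PresentedGroup rels)) :=
    fun e => Additive.ofMul (Abelianization.of (PresentedGroup.of e)) with hgdef
  have hg : ∀ e : S, (((n e).natAbs : ℤ)) • g e = 0 := by
    intro e
    have h1 : (n e) • g e = 0 := by
      rw [hgdef]
      show (n e) • Additive.ofMul (Abelianization.of (PresentedGroup.of e)) = 0
      rw [← ofMul_zpow, ← map_zpow, key e, map_one]
      rfl
    rcases Int.natAbs_eq (n e) with h | h
    · rw [← h]; exact h1
    · have h2 : ((n e).natAbs : ℤ) = -(n e) := by omega
      rw [h2, neg_smul, h1, neg_zero]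
  set ψ : M →+ Additive (Abelianization (PresentedGroup rels)) :=
    DirectSum.toAddMonoid (fun e => ZMod.lift ((n e).natAbs)
      ⟨zmultiplesHom _ (g e), by simpa using hg e⟩) with hψ
  have hψof : ∀ e : S, ψ (DirectSum.of (fun e => ZMod (n e).natAbs) e 1) = g e := by
    intro e
    rw [hψ, DirectSum.toAddMonoid_of]
    have h1 : (1 : ZMod (n e).natAbs) = ((1 : ℤ) : ZMod (n e).natAbs) := by norm_cast
    rw [h1, ZMod.lift_coe]
    simp
  have hΦof : ∀ e : S, Φ (Abelianization.of (PresentedGroup.of e)) = f e := by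
    intro e
    rw [hΦ, Abelianization.lift_apply_of, hφ0]
    exact PresentedGroup.toGroup.of hf
  -- the two compositions are identities
  have comp1 : (MonoidHom.toAdditiveLeft Φ).comp ψ = AddMonoidHom.id M := by
    refine DirectSum.addHom_ext fun e x => ?_
    obtain ⟨k, rfl⟩ := ZMod.intCast_surjective x
    have hx : ((k : ℤ) : ZMod (n e).natAbs) = k • (1 : ZMod (n e).natAbs) := by
      rw [zsmul_one]
    rw [hx, map_zsmul, map_zsmul, map_zsmul]
    congr 1
    show MonoidHom.toAdditiveLeft Φ (ψ (DirectSum.of (fun e => ZMod (n e).natAbs) e 1)) = _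
    rw [hψof]
    show Multiplicative.toAdd (Φ (Abelianization.of (PresentedGroup.of e))) = _
    rw [hΦof]
    rfl
  have comp2 : (AddMonoidHom.toMultiplicativeLeft ψ).comp Φ =
      MonoidHom.id (Abelianization (PresentedGroup rels)) := by
    apply Abelianization.hom_ext
    apply PresentedGroup.ext
    intro x
    show AddMonoidHom.toMultiplicativeLeft ψ (Φ (Abelianization.of (PresentedGroup.of x))) = _
    rw [hΦof]
    show Additive.toMul (ψ (DirectSum.of (fun e => ZMod (n e).natAbs) x 1)) = _
    rw [hψof]
    rfl
  exact ⟨{ toFun := MonoidHom.toAdditiveLeft Φ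
           invFun := ψ
           left_inv := fun x => DFunLike.congr_fun comp2 (Additive.toMul x)
           right_inv := fun x => DFunLike.congr_fun comp1 x
           map_add' := map_add _ }⟩

end Aux

/-- Proposition 6.5. For a weighted graph `(K, w, A)` on a finite vertex
type, with `R` = (#edges of `K` not in `A`) + (#edges of `A` with weight 0) and
`F = ⨁_{ab ∈ A, w(ab) ≠ 0} ℤ/w(ab)` (a finite abelian group), the abelianization of
`π₁(K, w, A)` is isomorphic to `ℤ^R × F`; in particular the torsion-free rank `R` equals
(#edges of `K` − #vertices of `K` + 1) + #{`ab ∈ A` : `w(ab) = 0`}. -/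

theorem abelianization_weighted_pi1_graph_rank [LinearOrder V] [Finite V]
    (K : SimpleGraph V) (w : Sym2 V → ℤ) (A : SimpleGraph V)
    (hwsc : IsWSC K (∅ : Set (Finset V)) w A)
    (R : ℕ)
    (hR : R = Nat.card {e : WGen K // ¬ A.Adj e.1.1 e.1.2} +
      Nat.card {e : WGen K // A.Adj e.1.1 e.1.2 ∧ w s(e.1.1, e.1.2) = 0}) :
    Finite (⨁ e : {e : WGen K // A.Adj e.1.1 e.1.2 ∧ w s(e.1.1, e.1.2) ≠ 0},
        ZMod (w s(e.1.1.1, e.1.1.2)).natAbs) ∧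
    Nonempty (Additive (Abelianization (wpi1 K (∅ : Set (Finset V)) w A)) ≃+
      (Fin R → ℤ) ×
        ⨁ e : {e : WGen K // A.Adj e.1.1 e.1.2 ∧ w s(e.1.1, e.1.2) ≠ 0},
          ZMod (w s(e.1.1.1, e.1.1.2)).natAbs) ∧
    R = (Nat.card (WGen K) + 1 - Nat.card V) +
      Nat.card {e : WGen K // A.Adj e.1.1 e.1.2 ∧ w s(e.1.1, e.1.2) = 0} := by
  classical
  haveI : Fintype V := Fintype.ofFinite V
  haveI : Nonempty V := hwsc.conn.nonempty
  haveI : Finite (WGen K) := by unfold WGen; infer_instance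
  haveI : Fintype (WGen K) := Fintype.ofFinite _
  set n : WGen K → ℤ := fun e => if A.Adj e.1.1 e.1.2 then w s(e.1.1, e.1.2) else 0 with hn
  set p : WGen K → Prop := fun e => A.Adj e.1.1 e.1.2 ∧ w s(e.1.1, e.1.2) ≠ 0 with hp
  -- hypotheses of the auxiliary abelianization computation
  have hrels : ∀ r ∈ WRelators K (∅ : Set (Finset V)) w A,
      ∃ e : WGen K, r = FreeGroup.of e ^ n e := by
    rintro r (⟨e, hA, rfl⟩ | ⟨a, v, b, _, _, _, _, _, hT, _⟩)
    · exact ⟨e, by rw [hn]; simp [hA]⟩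
    · exact absurd hT (Set.notMem_empty _)
  have hmem : ∀ e : WGen K, n e = 0 ∨
      FreeGroup.of e ^ n e ∈ WRelators K (∅ : Set (Finset V)) w A := by
    intro e
    by_cases hA : A.Adj e.1.1 e.1.2
    · exact Or.inr (Or.inl ⟨e, hA, by rw [hn]; simp [hA]⟩)
    · exact Or.inl (by rw [hn]; simp [hA])
  obtain ⟨eq1⟩ := aux_abelianization n (WRelators K (∅ : Set (Finset V)) w A) hrels hmem
  -- equivalences between the components
  have eqP : (∀ e : {x : WGen K // p x}, ZMod (n e.1).natAbs) ≃+
      (⨁ e : {e : WGen K // A.Adj e.1.1 e.1.2 ∧ w s(e.1.1, e.1.2) ≠ 0},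
        ZMod (w s(e.1.1.1, e.1.1.2)).natAbs) := by
    refine (AddEquiv.piCongrRight fun e => zmodCongr ?_).trans
      (DirectSum.addEquivProd _).symm
    simp only [hn]
    rw [if_pos e.2.1]
  have hnzero : ∀ e : {x : WGen K // ¬ p x}, (n e.1).natAbs = 0 := by
    intro e
    have he := e.2
    simp only [hp] at he
    push_neg at he
    have h0 : n e.1 = 0 := by
      by_cases hA : A.Adj e.1.1.1 e.1.1.2
      · simp only [hn]; rw [if_pos hA]; exact he hA
      · simp only [hn]; rw [if_neg hA]
    exact Int.natAbs_eq_zero.mpr h0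
  -- cardinality of the free part
  have hcard0 : Nat.card {e : WGen K // ¬ p e} = R := by
    have e1 : {e : WGen K // ¬ p e} ≃
        {e : WGen K // ¬ A.Adj e.1.1 e.1.2 ∨ (A.Adj e.1.1 e.1.2 ∧ w s(e.1.1, e.1.2) = 0)} :=
      Equiv.subtypeEquivRight fun e => by
        by_cases hA : A.Adj e.1.1 e.1.2 <;> simp [hp, hA]
    have hdisj : Disjoint (fun e : WGen K => ¬ A.Adj e.1.1 e.1.2)
        (fun e : WGen K => A.Adj e.1.1 e.1.2 ∧ w s(e.1.1, e.1.2) = 0) := by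
      rw [Pi.disjoint_iff]
      intro e
      rw [Prop.disjoint_iff]
      tauto
    rw [Nat.card_congr e1, Nat.card_eq_fintype_card,
      Fintype.card_subtype_or_disjoint _ _ hdisj, hR,
      Nat.card_eq_fintype_card, Nat.card_eq_fintype_card]
  have eFin : {e : WGen K // ¬ p e} ≃ Fin R :=
    Fintype.equivFinOfCardEq (by rw [← Nat.card_eq_fintype_card, hcard0])
  have eqNP : (∀ e : {x : WGen K // ¬ p x}, ZMod (n e.1).natAbs) ≃+ (Fin R → ℤ) :=
    (AddEquiv.piCongrRight fun e => (zmodCongr (hnzero e)).trans zmodZeroAddEquivInt).trans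
      (piCongrLeftAddEquiv ℤ eFin)
  -- edge counts
  have hAedge : Nat.card {e : WGen K // A.Adj e.1.1 e.1.2} = Nat.card V - 1 := by
    have hbij : Function.Bijective (fun e : {e : WGen K // A.Adj e.1.1 e.1.2} =>
        (⟨s(e.1.1.1, e.1.1.2), e.2⟩ : A.edgeSet)) := by
      constructor
      · rintro ⟨⟨⟨a, b⟩, hab, hK⟩, hA⟩ ⟨⟨⟨c, d⟩, hcd, hK'⟩, hA'⟩ h
        have h := congrArg Subtype.val h
        simp only [Sym2.eq_iff] at h
        rcases h with ⟨rfl, rfl⟩ | ⟨rfl, rfl⟩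
        · rfl
        · exact absurd (hab.trans hcd) (lt_irrefl _)
      · rintro ⟨s, hs⟩
        induction s using Sym2.ind with
        | _ x y =>
          rw [SimpleGraph.mem_edgeSet] at hs
          rcases lt_or_gt_of_ne (A.ne_of_adj hs) with h | h
          · exact ⟨⟨⟨(x, y), h, hwsc.le hs⟩, hs⟩, rfl⟩
          · exact ⟨⟨⟨(y, x), h, hwsc.le hs.symm⟩, hs.symm⟩, Subtype.ext (Sym2.eq_swap)⟩
    have hc := hwsc.tree.card_edgeFinset
    rw [Nat.card_eq_of_bijective _ hbij, Nat.card_eq_fintype_card,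
      ← SimpleGraph.edgeFinset_card, Nat.card_eq_fintype_card]
    omega
  have hcompl : Nat.card {e : WGen K // ¬ A.Adj e.1.1 e.1.2} +
      Nat.card {e : WGen K // A.Adj e.1.1 e.1.2} = Nat.card (WGen K) := by
    have h1 := Fintype.card_subtype_compl (fun e : WGen K => A.Adj e.1.1 e.1.2)
    have h2 := Fintype.card_subtype_le (fun e : WGen K => A.Adj e.1.1 e.1.2)
    rw [Nat.card_eq_fintype_card, Nat.card_eq_fintype_card, Nat.card_eq_fintype_card]
    omega
  have hVpos : 0 < Nat.card V := Nat.card_pos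
  refine ⟨?_, ⟨?_⟩, ?_⟩
  · haveI : ∀ e : {e : WGen K // A.Adj e.1.1 e.1.2 ∧ w s(e.1.1, e.1.2) ≠ 0},
        Finite (ZMod (w s(e.1.1.1, e.1.1.2)).natAbs) := fun e => by
      haveI : NeZero (w s(e.1.1.1, e.1.1.2)).natAbs := ⟨Int.natAbs_ne_zero.mpr e.2.2⟩
      infer_instance
    exact Finite.of_equiv _ (DirectSum.addEquivProd _).symm.toEquiv
  · exact eq1.trans ((DirectSum.addEquivProd _).trans
      ((piSubtypeProdAddEquiv p _).trans
        ((AddEquiv.prodCongr eqP eqNP).trans AddEquiv.prodComm)))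
  · rw [hR]
    omega
end
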